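/- arXiv:math/0405254 — 4 statements merged into one kernel-verified Lean document; each statement's English description precedes it below -/
import Mathlib

section
/- Let Z be a finitely generated commutative algebra over a field k, and let Z' be a countable subring of Z. Let p be a prime ideal of Z with p ∩ Z' = 0. If k is uncountable and algebraically closed, then the set of maximal ideals m of Z with p ⊆ m and m ∩ Z' = 0 is dense in V(p) = {m maximal : p ⊆ m} (with the Zariski topology on the maximal spectrum). -/
universe u v

/-- A field extension of countable rank of an uncountable field is algebraic. -/
lemma aux_isAlgebraic_of_rank_le_aleph0
    (k : Type u) [Field k] [Uncountable k] (K : Type v) [Field K] [Algebra k K]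
    (h : Module.rank k K ≤ Cardinal.aleph0) : Algebra.IsAlgebraic k K := by
  refine ⟨fun x => ?_⟩
  by_contra hx
  have li := Transcendental.linearIndependent_sub_inv (F := k) (E := K) (x := x) hx
  have h1 : Cardinal.lift.{v} (Cardinal.mk k) ≤ Cardinal.lift.{u} (Module.rank k K) :=
    li.cardinal_lift_le_rank
  have h2 : Cardinal.lift.{u} (Module.rank k K) ≤ Cardinal.lift.{u} (Cardinal.aleph0) :=
    Cardinal.lift_le.2 h
  rw [Cardinal.lift_aleph0] at h2
  have h3 : Cardinal.mk k ≤ Cardinal.aleph0 := by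
    simpa using h1.trans h2
  exact absurd h3 (not_le.2 Cardinal.aleph0_lt_mk)

/-- A localization of a finitely generated algebra at a countable submonoid has
countable rank. -/
lemma aux_rank_localization
    (k R : Type*) [Field k] [CommRing R] [Algebra k R] [Algebra.FiniteType k R]
    (T : Submonoid R) (hTc : (T : Set R).Countable) :
    Module.rank k (Localization T) ≤ Cardinal.aleph0 := by
  classical
  obtain ⟨s, hs⟩ := Algebra.FiniteType.out (R := k) (A := R)
  set S := Localization T with hS
  -- the countable set of "monomials" spanning R
  set C : Set R := (Submonoid.closure (s : Set R) : Set R) with hC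
  have hCc : C.Countable := by
    rw [hC, Submonoid.closure_eq_image_prod, ← Set.range_list_map_coe]
    exact (Set.countable_range _).image _
  haveI : Countable C := hCc.to_subtype
  haveI : Countable T := Set.countable_coe_iff.mpr hTc
  have hCspan : Submodule.span k C = ⊤ := by
    rw [hC, ← Algebra.adjoin_eq_span, hs, Algebra.top_toSubmodule]
  -- counting spanning set for the localization
  set G : Set S := Set.range fun q : C × T =>
    algebraMap R S (q.1 : R) * IsLocalization.mk' S (1 : R) q.2 with hG
  haveI : Countable G := (Set.countable_range _).to_subtype
  have hGc : Cardinal.mk G ≤ Cardinal.aleph0 := Cardinal.mk_le_aleph0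
  have hGspan : Submodule.span k G = ⊤ := by
    rw [eq_top_iff]
    rintro x -
    obtain ⟨r, t, rfl⟩ := IsLocalization.exists_mk'_eq T x
    let f : R →ₗ[k] S :=
      (LinearMap.mulRight k (IsLocalization.mk' S (1 : R) t)).comp
        (IsScalarTower.toAlgHom k R S).toLinearMap
    have hfr : IsLocalization.mk' S r t = f r := by
      rw [IsLocalization.mk'_eq_mul_mk'_one r t]; rfl
    have hr : r ∈ Submodule.span k C := by rw [hCspan]; trivial
    have : f r ∈ Submodule.span k (f '' C) :=
      Submodule.apply_mem_span_image_of_mem_span f hr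
    rw [hfr]
    refine Submodule.span_mono ?_ this
    rintro y ⟨c, hc, rfl⟩
    exact ⟨(⟨c, hc⟩, t), rfl⟩
  calc Module.rank k S = Module.rank k (⊤ : Submodule k S) := (rank_top k S).symm
    _ = Module.rank k (Submodule.span k G) := by rw [hGspan]
    _ ≤ Cardinal.mk G := rank_span_le G
    _ ≤ Cardinal.aleph0 := hGc

/-- The key algebraic step: a maximal ideal containing `p`, avoiding `f`,
and in general position with respect to `Z'`. -/
lemma aux_exists_maximal
    (k : Type*) [Field k] [IsAlgClosed k] [Uncountable k]
    (Z : Type*) [CommRing Z] [Algebra k Z] [Algebra.FiniteType k Z]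
    (Z' : Subring Z) [Countable Z']
    (p : Ideal Z) (hp : p.IsPrime) (hgen : ∀ z ∈ Z', z ∈ p → z = 0)
    (f : Z) (hf : f ∉ p) :
    ∃ m : Ideal Z, m.IsMaximal ∧ p ≤ m ∧ f ∉ m ∧ ∀ z ∈ Z', z ∈ m → z = 0 := by
  classical
  haveI := hp
  set R := Z ⧸ p with hR
  let π : Z →ₐ[k] R := Ideal.Quotient.mkₐ k p
  have hπ : ∀ z : Z, π z = 0 ↔ z ∈ p := fun z => Ideal.Quotient.eq_zero_iff_mem
  set gens : Set R := π '' (insert f ((Z' : Set Z) \ {0})) with hgens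
  have hng : ∀ x ∈ gens, x ≠ 0 := by
    rintro x ⟨z, hz, rfl⟩ h0
    rw [hπ] at h0
    rcases hz with rfl | ⟨hz1, hz2⟩
    · exact hf h0
    · exact hz2 (hgen z hz1 h0)
  set T : Submonoid R := Submonoid.closure gens with hT
  have hTle : T ≤ nonZeroDivisors R :=
    Submonoid.closure_le.2 fun x hx => mem_nonZeroDivisors_of_ne_zero (hng x hx)
  have hTc : (T : Set R).Countable := by
    rw [hT, Submonoid.closure_eq_image_prod, ← Set.range_list_map_coe]
    haveI : Countable gens := by
      refine Set.Countable.to_subtype ?_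
      refine Set.Countable.image ?_ _
      have h1 : (↑Z' : Set Z).Countable := Set.countable_coe_iff.mp ‹Countable Z'›
      exact Set.Countable.insert f (h1.mono Set.diff_subset)
    exact (Set.countable_range _).image _
  set S := Localization T with hS
  haveI : IsDomain S := IsLocalization.isDomain_of_le_nonZeroDivisors S hTle
  obtain ⟨M, hM⟩ := Ideal.exists_maximal S
  haveI := hM
  set K := S ⧸ M with hK
  letI : Field K := Ideal.Quotient.field M
  have hrankS : Module.rank k S ≤ Cardinal.aleph0 := aux_rank_localization k R T hTc
  have hrankK : Module.rank k K ≤ Cardinal.aleph0 := by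
    refine le_trans ?_ hrankS
    exact LinearMap.rank_le_of_surjective (Ideal.Quotient.mkₐ k M).toLinearMap
      (Ideal.Quotient.mkₐ_surjective k M)
  haveI : Algebra.IsAlgebraic k K := aux_isAlgebraic_of_rank_le_aleph0 k K hrankK
  haveI : Algebra.IsIntegral k K := Algebra.IsAlgebraic.isIntegral
  have hbij : Function.Bijective (Algebra.ofId k K) :=
    ⟨(algebraMap k K).injective, IsAlgClosed.algebraMap_bijective_of_isIntegral.2⟩
  let ψ : K →ₐ[k] k := (AlgEquiv.ofBijective (Algebra.ofId k K) hbij).symm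
  let φ : Z →ₐ[k] k := ψ.comp ((Ideal.Quotient.mkₐ k M).comp ((IsScalarTower.toAlgHom k R S).comp π))
  have hφs : Function.Surjective φ := fun c =>
    ⟨algebraMap k Z c, (φ.commutes c).trans (by simp)⟩
  have key : ∀ t : Z, π t ∈ T → φ t ≠ 0 := by
    intro t ht h0
    have hu : IsUnit (algebraMap R S (π t)) := IsLocalization.map_units S ⟨π t, ht⟩
    have hu2 : IsUnit (ψ ((Ideal.Quotient.mkₐ k M) (algebraMap R S (π t)))) :=
      (hu.map (Ideal.Quotient.mkₐ k M)).map ψ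
    have : φ t = ψ ((Ideal.Quotient.mkₐ k M) (algebraMap R S (π t))) := rfl
    rw [this] at h0
    exact hu2.ne_zero h0
  refine ⟨RingHom.ker (φ : Z →+* k), RingHom.ker_isMaximal_of_surjective φ hφs, ?_, ?_, ?_⟩
  · intro z hz
    have : π z = 0 := (hπ z).2 hz
    show φ z = 0
    have : φ z = ψ ((Ideal.Quotient.mkₐ k M) (algebraMap R S (π z))) := rfl
    rw [this, ‹π z = 0›]
    simp
  · intro hmem
    exact key f (Submonoid.subset_closure ⟨f, Set.mem_insert f _, rfl⟩) hmem
  · intro z hz hzm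
    by_contra hz0
    exact key z (Submonoid.subset_closure ⟨z, Set.mem_insert_of_mem _ ⟨hz, hz0⟩, rfl⟩) hzm

/-- Let `Z` be a finitely generated commutative algebra over an uncountable
algebraically closed field `k`, `Z'` a countable subring of `Z`, and `p` a prime
ideal of `Z` with `p ∩ Z' = 0`.  Then the set of maximal ideals `m` of `Z` with
`p ⊆ m` and `m ∩ Z' = 0` is dense in `V(p) = {m maximal : p ⊆ m}`, with the
Zariski topology on the maximal spectrum. -/
theorem dense_general_position_maximal_ideals
    (k : Type*) [Field k] [IsAlgClosed k] [Uncountable k]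
    (Z : Type*) [CommRing Z] [Algebra k Z] [Algebra.FiniteType k Z]
    (Z' : Subring Z) [Countable Z']
    (p : Ideal Z) (hp : p.IsPrime) (hgen : ∀ z ∈ Z', z ∈ p → z = 0) :
    Dense {m : {m : MaximalSpectrum Z // p ≤ m.asIdeal} |
      ∀ z ∈ Z', z ∈ m.val.asIdeal → z = 0} := by
  rw [dense_iff_inter_open]
  rintro U hU ⟨m₀, hm₀⟩
  -- unfold the induced topologies
  obtain ⟨V, hV, rfl⟩ := isOpen_induced_iff.mp hU
  obtain ⟨W, hW, rfl⟩ := isOpen_induced_iff.mp hV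
  have hm₀W : (m₀ : {m : MaximalSpectrum Z // p ≤ m.asIdeal}).val.toPrimeSpectrum ∈ W := hm₀
  obtain ⟨t, ⟨f, rfl⟩, hmt, htW⟩ :=
    PrimeSpectrum.isTopologicalBasis_basic_opens.exists_subset_of_mem_open hm₀W hW
  have hfm₀ : f ∉ m₀.val.asIdeal := by
    exact hmt
  have hfp : f ∉ p := fun h => hfm₀ (m₀.prop h)
  obtain ⟨m, hmax, hpm, hfm, hgp⟩ := aux_exists_maximal k Z Z' p hp hgen f hfp
  refine ⟨⟨⟨m, hmax⟩, hpm⟩, ?_, ?_⟩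
  · show (⟨m, hmax⟩ : MaximalSpectrum Z).toPrimeSpectrum ∈ W
    exact htW hfm
  · exact hgp
end

section
/- Let V(p) be the set of maximal ideals of an affine domain Z over an uncountable algebraically closed field k containing a non-maximal prime ideal p. Then V(p) cannot be written as a countable union of proper Zariski-closed subsets of V(p). -/
universe u v

/-- A field extension of rank smaller than the cardinality of the base field is algebraic. -/
lemma my_isAlgebraic_of_small_rank {k : Type u} {K : Type v} [Field k] [Field K] [Algebra k K]
    (h : Cardinal.lift.{u} (Module.rank k K) < Cardinal.lift.{v} (Cardinal.mk k)) :
    Algebra.IsAlgebraic k K := by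
  refine ⟨fun x => ?_⟩
  by_contra hx
  exact absurd ((Transcendental.linearIndependent_sub_inv (x := x) hx).cardinal_lift_le_rank)
    h.not_ge

open Cardinal in
/-- In a finitely generated domain over an uncountable algebraically closed field, a countable
family of nonzero elements avoids some maximal ideal. -/
lemma my_exists_maximal_avoiding {k : Type u} {R : Type v} [Field k] [IsAlgClosed k]
    [Uncountable k] [CommRing R] [IsDomain R] [Algebra k R] [Algebra.FiniteType k R]
    (g : ℕ → R) (hg : ∀ n, g n ≠ 0) :
    ∃ m : Ideal R, m.IsMaximal ∧ ∀ n, g n ∉ m := by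
  classical
  set S : Submonoid R := Submonoid.closure (Set.range g) with hSdef
  have hS : S ≤ nonZeroDivisors R := by
    rw [hSdef, Submonoid.closure_le]
    rintro _ ⟨n, rfl⟩
    exact mem_nonZeroDivisors_of_ne_zero (hg n)
  set B := Localization S with hBdef
  haveI : IsDomain B := IsLocalization.isDomain_of_le_nonZeroDivisors B hS
  -- a countable spanning family for `R` over `k`
  obtain ⟨ι, hι, f, hf⟩ :=
    Algebra.FiniteType.iff_quotient_mvPolynomial'.mp ‹Algebra.FiniteType k R›
  letI : Fintype ι := hι
  set v : (ι →₀ ℕ) → R := fun i => f (MvPolynomial.basisMonomials ι k i) with hv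
  have hvspan : Submodule.span k (Set.range v) = ⊤ := by
    rw [hv]
    have : Set.range (fun i => f (MvPolynomial.basisMonomials ι k i))
        = f '' (Set.range (MvPolynomial.basisMonomials ι k)) := by
      rw [← Set.range_comp]; rfl
    rw [this]
    show Submodule.span k (f.toLinearMap '' _) = ⊤
    rw [← Submodule.map_span, (MvPolynomial.basisMonomials ι k).span_eq,
      Submodule.map_top, LinearMap.range_eq_top]
    · exact hf
  -- `S` is countable
  haveI : Countable ↥(Set.range g) := (Set.countable_range g).to_subtype
  haveI hScount : Countable S := by
    have hsub : (S : Set R) ⊆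
        Set.range (fun l : List (Set.range g) => (l.map Subtype.val).prod) := by
      intro x hx
      obtain ⟨l, hl, rfl⟩ := Submonoid.exists_list_of_mem_closure hx
      refine ⟨l.attach.map (fun y => ⟨y.1, hl y.1 y.2⟩), ?_⟩
      simp [List.map_map, Function.comp_def]
    exact ((Set.countable_range _).mono hsub).to_subtype
  -- countable spanning set for `B` over `k`
  set E : Set B := Set.range
    (fun q : (ι →₀ ℕ) × S => algebraMap R B (v q.1) * IsLocalization.mk' B 1 q.2) with hE
  have hEspan : Submodule.span k E = ⊤ := by
    rw [eq_top_iff]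
    rintro x -
    obtain ⟨⟨r, s⟩, rfl⟩ := IsLocalization.mk'_surjective S x
    dsimp only
    rw [IsLocalization.mk'_eq_mul_mk'_one]
    set L : R →ₗ[k] B :=
      (LinearMap.mulRight k (IsLocalization.mk' B 1 s)).comp
        (IsScalarTower.toAlgHom k R B).toLinearMap with hL
    have hr : r ∈ Submodule.span k (Set.range v) := by rw [hvspan]; trivial
    have hLr : (algebraMap R B) r * IsLocalization.mk' B 1 s = L r := rfl
    rw [hLr]
    have h2 := Submodule.mem_map_of_mem (f := L) hr
    rw [Submodule.map_span] at h2
    refine Submodule.span_mono ?_ h2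
    rintro _ ⟨_, ⟨i, rfl⟩, rfl⟩
    exact ⟨(i, s), rfl⟩
  haveI hEcount : Countable ↥E := (Set.countable_range _).to_subtype
  have hrankB : Module.rank k B ≤ Cardinal.aleph0 := by
    have h1 := rank_span_le (R := k) E
    rw [hEspan, rank_top] at h1
    exact h1.trans (Cardinal.mk_le_aleph0)
  -- pick a maximal ideal of `B`; its residue field is algebraic, hence equal to `k`
  obtain ⟨M, hM⟩ := Ideal.exists_maximal B
  haveI := hM
  letI : Field (B ⧸ M) := Ideal.Quotient.field M
  have hrankK : Module.rank k (B ⧸ M) ≤ Cardinal.aleph0 := by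
    refine le_trans ?_ hrankB
    exact (Ideal.Quotient.mkₐ k M).toLinearMap.rank_le_of_surjective
      (Ideal.Quotient.mkₐ_surjective k M)
  haveI halg : Algebra.IsAlgebraic k (B ⧸ M) := by
    refine my_isAlgebraic_of_small_rank ?_
    calc Cardinal.lift.{u} (Module.rank k (B ⧸ M)) ≤ Cardinal.lift.{u} Cardinal.aleph0 :=
          Cardinal.lift_le.mpr hrankK
      _ = Cardinal.aleph0 := by simp
      _ < Cardinal.lift.{v} (Cardinal.mk k) := by
          rw [Cardinal.aleph0_lt_lift]; exact Cardinal.aleph0_lt_mk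
  haveI : Algebra.IsIntegral k (B ⧸ M) := Algebra.isAlgebraic_iff_isIntegral.mp halg
  have hsurj : Function.Surjective (algebraMap k (B ⧸ M)) :=
    IsAlgClosed.algebraMap_bijective_of_isIntegral.2
  set φ : R →+* B ⧸ M := (Ideal.Quotient.mk M).comp (algebraMap R B) with hφ
  have hcomp : (algebraMap k (B ⧸ M)) = φ.comp (algebraMap k R) := by
    rw [IsScalarTower.algebraMap_eq k B (B ⧸ M), IsScalarTower.algebraMap_eq k R B,
      Ideal.Quotient.algebraMap_eq, hφ, RingHom.comp_assoc]
  have hφsurj : Function.Surjective φ := by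
    rw [hcomp] at hsurj
    exact Function.Surjective.of_comp hsurj
  refine ⟨RingHom.ker φ, RingHom.ker_isMaximal_of_surjective φ hφsurj, fun n hn => ?_⟩
  have hunit : IsUnit (algebraMap R B (g n)) :=
    IsLocalization.map_units (M := S) B ⟨g n, Submonoid.subset_closure ⟨n, rfl⟩⟩
  have : IsUnit (φ (g n)) := hunit.map (Ideal.Quotient.mk M)
  exact this.ne_zero (by rwa [RingHom.mem_ker] at hn)

/-- Let `Z` be an affine domain over an uncountable algebraically closed field `k`
and `p` a non-maximal prime ideal of `Z`.  Then `V(p)`, the set of maximal ideals of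
`Z` containing `p` with the Zariski topology, cannot be written as a countable union
of proper closed subsets. -/
theorem vanishing_set_not_countable_union_of_proper_closed
    (k : Type*) [Field k] [IsAlgClosed k] [Uncountable k]
    (Z : Type*) [CommRing Z] [IsDomain Z] [Algebra k Z] [Algebra.FiniteType k Z]
    (p : Ideal Z) (hp : p.IsPrime) (hpm : ¬ p.IsMaximal) :
    ¬ ∃ C : ℕ → Set {m : MaximalSpectrum Z // p ≤ m.asIdeal},
        (∀ n, IsClosed (C n) ∧ C n ≠ Set.univ) ∧ (⋃ n, C n) = Set.univ := by
  rintro ⟨C, hC, hU⟩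
  haveI := hp
  -- extract, for each `n`, an element `f n ∉ p` vanishing on `C n`
  have key : ∀ n, ∃ f : Z, f ∉ p ∧ ∀ x, x ∈ C n → f ∈ x.1.asIdeal := by
    intro n
    obtain ⟨hCl, hCne⟩ := hC n
    rw [isClosed_induced_iff] at hCl
    obtain ⟨D, hD, hCD⟩ := hCl
    rw [isClosed_induced_iff] at hD
    obtain ⟨E, hE, hDE⟩ := hD
    rw [PrimeSpectrum.isClosed_iff_zeroLocus] at hE
    obtain ⟨s, rfl⟩ := hE
    obtain ⟨x₀, hx₀⟩ : ∃ x₀, x₀ ∉ C n := by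
      by_contra h
      push_neg at h
      exact hCne (Set.eq_univ_of_forall h)
    have hx₀' : ¬ s ⊆ (x₀.1.asIdeal : Set Z) := by
      intro hsub
      apply hx₀
      rw [← hCD, ← hDE]
      exact hsub
    obtain ⟨f, hfs, hfm⟩ := Set.not_subset.mp hx₀'
    refine ⟨f, fun hfp => hfm (x₀.2 hfp), fun x hx => ?_⟩
    rw [← hCD, ← hDE] at hx
    exact hx hfs
  choose f hfp hfC using key
  -- pass to the quotient domain `Z ⧸ p`
  letI R := Z ⧸ p
  haveI : Algebra.FiniteType k R :=
    Algebra.FiniteType.of_surjective (Ideal.Quotient.mkₐ k p)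
      (Ideal.Quotient.mkₐ_surjective k p)
  set g : ℕ → R := fun n => Ideal.Quotient.mk p (f n) with hg
  have hgne : ∀ n, g n ≠ 0 := fun n h =>
    hfp n (Ideal.Quotient.eq_zero_iff_mem.mp h)
  obtain ⟨m, hm, hgm⟩ := my_exists_maximal_avoiding (k := k) g hgne
  set M : Ideal Z := m.comap (Ideal.Quotient.mk p) with hM
  haveI hMmax : M.IsMaximal :=
    Ideal.comap_isMaximal_of_surjective _ Ideal.Quotient.mk_surjective
  have hpM : p ≤ M := fun z hz => by
    show Ideal.Quotient.mk p z ∈ m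
    rw [Ideal.Quotient.eq_zero_iff_mem.mpr hz]
    exact m.zero_mem
  set x : {m' : MaximalSpectrum Z // p ≤ m'.asIdeal} := ⟨⟨M, hMmax⟩, hpM⟩ with hx
  have hxU : x ∈ ⋃ n, C n := hU.symm ▸ Set.mem_univ x
  obtain ⟨n, hn⟩ := Set.mem_iUnion.mp hxU
  exact hgm n (hfC n x hn)
end

section
/- Let R be a commutative noetherian ring, M an R-module, r a non-negative integer, and x_1, …, x_n ∈ R with x_1, …, x_r an M-regular sequence (r ≤ n). Then the r-th Koszul cohomology H^r(M ⊗_R K(x_1, …, x_n)) is isomorphic to {m ∈ M : m·I ⊆ Σ_{i=1}^r x_i M} / Σ_{i=1}^r x_i M, where I = Σ_{i=1}^n x_i R. -/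
/-- The `i`-th term of the cochain Koszul complex of the module `M` on `n` elements
(realized via functions on `i`-element subsets of `Fin n` with values in `M`;
this is `M ⊗ ⋀ⁱ Rⁿ`). -/
abbrev KoszulTerm (R M : Type*) [CommRing R] [AddCommGroup M] [Module R M]
    (n i : ℕ) : Type _ :=
  {s : Finset (Fin n) // s.card = i} → M

/-- The Koszul differential `M ⊗ ⋀ⁱ Rⁿ → M ⊗ ⋀ⁱ⁺¹ Rⁿ`, given by wedging with
`x = (x 0, …, x (n-1))`. -/
noncomputable def koszulD (R M : Type*) [CommRing R] [AddCommGroup M] [Module R M]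
    {n : ℕ} (x : Fin n → R) (i : ℕ) :
    KoszulTerm R M n i →ₗ[R] KoszulTerm R M n (i + 1) :=
  LinearMap.pi fun t => ∑ j ∈ t.val.attach,
    ((-1 : R) ^ ((t.val.filter (fun a => a < j.val)).card) * x j.val) •
      LinearMap.proj
        (⟨t.val.erase j.val, by
          simp [Finset.card_erase_of_mem j.property, t.property]⟩ :
          {s : Finset (Fin n) // s.card = i})

/-- The `r`-th boundary submodule of the Koszul complex: the image of the
differential coming from degree `r - 1` (interpreted as `0` when `r = 0`). -/
noncomputable def koszulBoundary (R M : Type*) [CommRing R] [AddCommGroup M]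
    [Module R M] {n : ℕ} (x : Fin n → R) :
    (r : ℕ) → Submodule R (KoszulTerm R M n r)
  | 0 => ⊥
  | (s + 1) => LinearMap.range (koszulD R M x s)


namespace KoszulProof

variable {R : Type*} [CommRing R] {n : ℕ}

/-- The sign `(-1)^{#{a ∈ t | a < j}}`. -/
def ksgn (R : Type*) [CommRing R] {n : ℕ} (j : Fin n) (t : Finset (Fin n)) : R :=
  (-1) ^ ((t.filter (fun a => a < j)).card)

lemma ksgn_sq (j : Fin n) (t : Finset (Fin n)) : (ksgn R j t) * ksgn R j t = 1 := by
  rw [ksgn, ← pow_add, ← two_mul, pow_mul, neg_one_sq, one_pow]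

lemma ksgn_erase_of_not_lt {a j : Fin n} (h : ¬ a < j) (t : Finset (Fin n)) :
    ksgn R j (t.erase a) = ksgn R j t := by
  unfold ksgn
  rw [Finset.filter_erase, Finset.erase_eq_of_notMem (by simp [h])]

lemma ksgn_erase_of_lt {a j : Fin n} (h : a < j) {t : Finset (Fin n)} (ha : a ∈ t) :
    ksgn R j (t.erase a) = - ksgn R j t := by
  unfold ksgn
  have hmem : a ∈ t.filter (fun b => b < j) := by
    simp only [Finset.mem_filter]; exact ⟨ha, h⟩
  rw [Finset.filter_erase, Finset.card_erase_of_mem hmem]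
  obtain ⟨c, hc⟩ : ∃ c, (t.filter (fun b => b < j)).card = c + 1 :=
    ⟨_, (Nat.succ_pred_eq_of_pos (Finset.card_pos.2 ⟨a, hmem⟩)).symm⟩
  rw [hc]
  simp [pow_succ]

lemma ksgn_insert_of_not_lt {a j : Fin n} (h : ¬ a < j) (t : Finset (Fin n)) :
    ksgn R j (insert a t) = ksgn R j t := by
  unfold ksgn
  rw [Finset.filter_insert, if_neg h]

lemma ksgn_insert_of_lt {a j : Fin n} (h : a < j) {t : Finset (Fin n)} (ha : a ∉ t) :
    ksgn R j (insert a t) = - ksgn R j t := by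
  unfold ksgn
  rw [Finset.filter_insert, if_pos h,
    Finset.card_insert_of_notMem (fun hm => ha (Finset.mem_filter.mp hm).1), pow_succ]
  ring

lemma ksgn_anticomm {j k : Fin n} {t : Finset (Fin n)} (hj : j ∈ t) (hk : k ∈ t)
    (hjk : j ≠ k) :
    ksgn R j t * ksgn R k (t.erase j) = -(ksgn R k t * ksgn R j (t.erase k)) := by
  rcases hjk.lt_or_gt with h | h
  · rw [ksgn_erase_of_lt h hj, ksgn_erase_of_not_lt (asymm h)]
    ring
  · rw [ksgn_erase_of_not_lt (asymm h), ksgn_erase_of_lt h hk]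
    ring

lemma ksgn_insert_anticomm {j k : Fin n} {t : Finset (Fin n)} (hj : j ∉ t) (hk : k ∈ t) :
    ksgn R k t * ksgn R j (t.erase k) + ksgn R j t * ksgn R k (insert j t) = 0 := by
  have hjk : j ≠ k := fun h => hj (h ▸ hk)
  rcases hjk.lt_or_gt with h | h
  · rw [ksgn_erase_of_not_lt (asymm h), ksgn_insert_of_lt h hj]
    ring
  · rw [ksgn_erase_of_lt h hk, ksgn_insert_of_not_lt (asymm h)]
    ring

end KoszulProof

section Part2
namespace KoszulProof

variable {R : Type*} [CommRing R] {n : ℕ}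
variable {M : Type*} [AddCommGroup M] [Module R M]

/-- Total-function version of the Koszul differential. -/
def Dh (x : Fin n → R) (g : Finset (Fin n) → M) : Finset (Fin n) → M :=
  fun t => ∑ j ∈ t, (ksgn R j t * x j) • g (t.erase j)

/-- Contraction with the `j`-th basis vector. -/
def Sh (R : Type*) {n : ℕ} {M : Type*} [CommRing R] [AddCommGroup M] [Module R M]
    (j : Fin n) (g : Finset (Fin n) → M) : Finset (Fin n) → M :=
  fun t => if j ∈ t then 0 else ksgn R j t • g (insert j t)

/-- Extension of an element of `KoszulTerm` to all finsets, by zero. -/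
def hat {n : ℕ} {M : Type*} [AddCommGroup M] {i : ℕ}
    (f : {s : Finset (Fin n) // s.card = i} → M) : Finset (Fin n) → M :=
  fun s => if h : s.card = i then f ⟨s, h⟩ else 0

lemma hat_injective {i : ℕ} {f g : KoszulTerm R M n i} (h : hat f = hat g) : f = g := by
  funext s
  have := congrFun h s.val
  simpa [hat, s.property] using this

lemma hat_zero {i : ℕ} : hat (0 : KoszulTerm R M n i) = 0 := by
  funext s
  simp [hat]

lemma hat_smul {i : ℕ} (c : R) (f : KoszulTerm R M n i) :
    hat (c • f) = c • hat f := by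
  funext s
  by_cases h : s.card = i <;> simp [hat, h]

lemma Dh_add (x : Fin n → R) (g₁ g₂ : Finset (Fin n) → M) :
    Dh x (g₁ + g₂) = Dh x g₁ + Dh x g₂ := by
  funext t
  simp [Dh, smul_add, Finset.sum_add_distrib]

/-- `Dh ∘ Dh = 0`. -/
lemma Dh_Dh (x : Fin n → R) (g : Finset (Fin n) → M) : Dh x (Dh x g) = 0 := by
  funext t
  show ∑ j ∈ t, (ksgn R j t * x j) • Dh x g (t.erase j) = 0
  simp only [Dh, Finset.smul_sum, smul_smul]
  rw [Finset.sum_sigma']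
  refine Finset.sum_involution (fun p _ => ⟨p.2, p.1⟩) ?_ ?_ ?_ ?_
  · rintro ⟨j, k⟩ hp
    rw [Finset.mem_sigma] at hp
    obtain ⟨hj, hk'⟩ := hp
    have hkj : k ≠ j := Finset.ne_of_mem_erase hk'
    have hk : k ∈ t := Finset.mem_of_mem_erase hk'
    have herase : (t.erase k).erase j = (t.erase j).erase k := Finset.erase_right_comm
    show (ksgn R j t * x j * (ksgn R k (t.erase j) * x k)) • g ((t.erase j).erase k)
      + (ksgn R k t * x k * (ksgn R j (t.erase k) * x j)) • g ((t.erase k).erase j) = 0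
    rw [herase, ← add_smul]
    have hs := ksgn_anticomm (R := R) hj hk (Ne.symm hkj)
    have : ksgn R j t * x j * (ksgn R k (t.erase j) * x k)
        + ksgn R k t * x k * (ksgn R j (t.erase k) * x j) = 0 := by
      linear_combination (x j * x k) * hs
    rw [this, zero_smul]
  · rintro ⟨j, k⟩ hp _
    rw [Finset.mem_sigma] at hp
    have hkj : k ≠ j := Finset.ne_of_mem_erase hp.2
    simp only [Sigma.mk.inj_iff, ne_eq, not_and]
    intro h
    exact absurd h hkj
  · rintro ⟨j, k⟩ hp
    rw [Finset.mem_sigma] at hp ⊢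
    exact ⟨Finset.mem_of_mem_erase hp.2,
      Finset.mem_erase.mpr ⟨(Finset.ne_of_mem_erase hp.2).symm, hp.1⟩⟩
  · rintro ⟨j, k⟩ _
    rfl

/-- The homotopy identity `Dh ∘ Sh R j + Sh R j ∘ Dh = x j • id`. -/
lemma Dh_Sh (x : Fin n → R) (j : Fin n) (g : Finset (Fin n) → M) (t : Finset (Fin n)) :
    Dh x (Sh R j g) t + Sh R j (Dh x g) t = x j • g t := by
  by_cases hj : j ∈ t
  · have h2 : Sh R j (Dh x g) t = 0 := if_pos hj
    rw [h2, add_zero]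
    show ∑ k ∈ t, (ksgn R k t * x k) • Sh R j g (t.erase k) = x j • g t
    rw [← Finset.add_sum_erase _ _ hj]
    have hz : ∀ k ∈ t.erase j, (ksgn R k t * x k) • Sh R j g (t.erase k) = 0 := by
      intro k hk
      have hjk : j ∈ t.erase k :=
        Finset.mem_erase.mpr ⟨fun h => (Finset.ne_of_mem_erase hk) h.symm, hj⟩
      rw [Sh, if_pos hjk, smul_zero]
    rw [Finset.sum_eq_zero hz, add_zero, Sh, if_neg (Finset.notMem_erase j t),
      Finset.insert_erase hj, ksgn_erase_of_not_lt (lt_irrefl j), smul_smul]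
    have : ksgn R j t * x j * ksgn R j t = x j := by
      have h := ksgn_sq (R := R) j t
      linear_combination x j * h
    rw [this]
  · have h1 : Sh R j (Dh x g) t = ksgn R j t • Dh x g (insert j t) := if_neg hj
    rw [h1]
    show (∑ k ∈ t, (ksgn R k t * x k) • Sh R j g (t.erase k))
      + ksgn R j t • Dh x g (insert j t) = x j • g t
    have hsplit : Dh x g (insert j t)
        = (ksgn R j (insert j t) * x j) • g ((insert j t).erase j)
          + ∑ k ∈ t, (ksgn R k (insert j t) * x k) • g ((insert j t).erase k) := by
      rw [Dh, Finset.sum_insert hj]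
    rw [hsplit, smul_add, Finset.erase_insert hj, ksgn_insert_of_not_lt (lt_irrefl j),
      smul_smul]
    have hcoef : ksgn R j t * (ksgn R j t * x j) = x j := by
      have h := ksgn_sq (R := R) j t
      linear_combination x j * h
    rw [hcoef, Finset.smul_sum, ← add_assoc, add_right_comm, ← Finset.sum_add_distrib]
    have hz : ∀ k ∈ t, (ksgn R k t * x k) • Sh R j g (t.erase k)
        + ksgn R j t • (ksgn R k (insert j t) * x k) • g ((insert j t).erase k) = 0 := by
      intro k hk
      have hkj : k ≠ j := fun h => hj (h ▸ hk)
      have hje : j ∉ t.erase k := fun h => hj (Finset.mem_of_mem_erase h)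
      rw [Sh, if_neg hje, Finset.erase_insert_of_ne hkj.symm, smul_smul, smul_smul]
      rw [← add_smul]
      have hs := ksgn_insert_anticomm (R := R) (j := j) (k := k) hj hk
      have : ksgn R k t * x k * ksgn R j (t.erase k)
          + ksgn R j t * (ksgn R k (insert j t) * x k) = 0 := by
        linear_combination x k * hs
      rw [this, zero_smul]
    rw [Finset.sum_eq_zero hz, zero_add]

end KoszulProof
end Part2

section Part3
namespace KoszulProof

open Pointwise

variable {R : Type*} [CommRing R] {n : ℕ} {M M₂ : Type*}
  [AddCommGroup M] [Module R M] [AddCommGroup M₂] [Module R M₂]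
variable (x : Fin n → R)

lemma Sh_zero (j : Fin n) : Sh R j (0 : Finset (Fin n) → M) = 0 := by
  funext t
  rw [Sh]
  split <;> simp

lemma koszulD_apply' {i : ℕ} (f : KoszulTerm R M n i) (t : Finset (Fin n))
    (h : t.card = i + 1) :
    koszulD R M x i f ⟨t, h⟩
      = ∑ j ∈ t.attach, (ksgn R j.val t * x j.val) • hat f (t.erase j.val) := by
  simp only [koszulD, LinearMap.pi_apply, LinearMap.sum_apply, LinearMap.smul_apply,
    LinearMap.proj_apply]
  refine Finset.sum_congr rfl fun j _ => ?_
  have hc : (t.erase j.val).card = i := by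
    simp [Finset.card_erase_of_mem j.property, h]
  rw [hat, dif_pos hc, ksgn]

lemma hat_koszulD {i : ℕ} (f : KoszulTerm R M n i) :
    hat (koszulD R M x i f) = Dh x (hat f) := by
  funext t
  by_cases h : t.card = i + 1
  · show dite _ _ _ = _
    rw [dif_pos h, koszulD_apply' x f t h, Dh,
      ← Finset.sum_attach t (fun j => (ksgn R j t * x j) • hat f (t.erase j))]
  · show dite _ _ _ = _
    rw [dif_neg h, Dh]
    symm
    refine Finset.sum_eq_zero fun j hj => ?_
    have hpos : 0 < t.card := Finset.card_pos.mpr ⟨j, hj⟩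
    have hc : (t.erase j).card ≠ i := by
      rw [Finset.card_erase_of_mem hj]
      omega
    rw [hat, dif_neg hc, smul_zero]

lemma koszulD_koszulD {i : ℕ} (f : KoszulTerm R M n i) :
    koszulD R M x (i + 1) (koszulD R M x i f) = 0 :=
  hat_injective (by rw [hat_koszulD, hat_koszulD, Dh_Dh, hat_zero])

lemma smul_cocycle {i : ℕ} (f : KoszulTerm R M n (i + 1))
    (hf : koszulD R M x (i + 1) f = 0) (j : Fin n) :
    x j • f ∈ LinearMap.range (koszulD R M x i) := by
  refine ⟨fun s => Sh R j (hat f) s.val, ?_⟩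
  apply hat_injective
  have hg : hat (fun s : {s : Finset (Fin n) // s.card = i} => Sh R j (hat f) s.val)
      = Sh R j (hat f) := by
    funext s
    by_cases h : s.card = i
    · rw [hat, dif_pos h]
    · rw [hat, dif_neg h, Sh]
      by_cases hj : j ∈ s
      · rw [if_pos hj]
      · rw [if_neg hj, hat,
          dif_neg (by simp [Finset.card_insert_of_notMem hj, h]), smul_zero]
  rw [hat_koszulD, hg, hat_smul]
  have hD : Dh x (hat f) = 0 := by rw [← hat_koszulD, hf, hat_zero]
  funext t
  have h2 := Dh_Sh x j (hat f) t
  rw [hD, Sh_zero, Pi.zero_apply, add_zero] at h2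
  rw [h2, Pi.smul_apply]

lemma smul_cocycle_zero (f : KoszulTerm R M n 0) (hf : koszulD R M x 0 f = 0)
    (j : Fin n) : x j • f = 0 := by
  funext s
  obtain ⟨s, hs⟩ := s
  have hs' : s = ∅ := Finset.card_eq_zero.mp hs
  subst hs'
  have h := congrFun hf ⟨{j}, Finset.card_singleton j⟩
  rw [koszulD_apply' x f {j} (Finset.card_singleton j)] at h
  have hmem : (⟨j, Finset.mem_singleton_self j⟩ : {a // a ∈ ({j} : Finset (Fin n))})
      ∈ ({j} : Finset (Fin n)).attach := Finset.mem_attach _ _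
  rw [Finset.sum_eq_single_of_mem _ hmem (fun b _ hb => absurd
      (Subtype.ext (Finset.mem_singleton.mp b.property)) hb)] at h
  have hk : ksgn R j {j} = 1 := by
    simp [ksgn, Finset.filter_singleton, lt_irrefl]
  rw [hk, one_mul, Finset.erase_singleton] at h
  have hhat : hat f (∅ : Finset (Fin n)) = f ⟨∅, hs⟩ := by
    rw [hat, dif_pos Finset.card_empty]
  rw [hhat] at h
  simpa using h

lemma smul_mem_boundary {i : ℕ} (f : KoszulTerm R M n i)
    (hf : koszulD R M x i f = 0) {y : R} (hy : y ∈ Ideal.span (Set.range x)) :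
    y • f ∈ koszulBoundary R M x i := by
  induction hy using Submodule.span_induction with
  | mem a ha =>
    obtain ⟨j, rfl⟩ := ha
    match i, f, hf with
    | 0, f, hf => exact (Submodule.mem_bot R).mpr (smul_cocycle_zero x f hf j)
    | (i + 1), f, hf => exact smul_cocycle x f hf j
  | zero => rw [zero_smul]; exact Submodule.zero_mem _
  | add a b _ _ ha hb => rw [add_smul]; exact Submodule.add_mem _ ha hb
  | smul r a _ ha => rw [smul_eq_mul, mul_smul]; exact Submodule.smul_mem _ r ha

/-- Functoriality of the Koszul terms. -/
def kmap (φ : M →ₗ[R] M₂) (i : ℕ) : KoszulTerm R M n i →ₗ[R] KoszulTerm R M₂ n i :=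
  φ.compLeft _

lemma kmap_apply (φ : M →ₗ[R] M₂) {i : ℕ} (f : KoszulTerm R M n i) (s) :
    kmap φ i f s = φ (f s) := rfl

lemma hat_kmap (φ : M →ₗ[R] M₂) {i : ℕ} (f : KoszulTerm R M n i) :
    hat (kmap φ i f) = φ ∘ hat f := by
  funext s
  by_cases h : s.card = i <;> simp [hat, kmap_apply, h]

lemma Dh_comp (φ : M →ₗ[R] M₂) (g : Finset (Fin n) → M) :
    Dh x (φ ∘ g) = φ ∘ Dh x g := by
  funext t
  simp [Dh, map_sum, map_smul, Function.comp]

lemma kmap_koszulD (φ : M →ₗ[R] M₂) {i : ℕ} (f : KoszulTerm R M n i) :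
    kmap φ (i + 1) (koszulD R M x i f) = koszulD R M₂ x i (kmap φ i f) :=
  hat_injective (by rw [hat_kmap, hat_koszulD, hat_koszulD, hat_kmap, Dh_comp])

variable (Q : Submodule R M)

lemma kmap_mkQ_eq_zero_iff {i : ℕ} (f : KoszulTerm R M n i) :
    kmap Q.mkQ i f = 0 ↔ ∀ s, f s ∈ Q := by
  constructor
  · intro h s
    have := congrFun h s
    simpa [kmap_apply, Submodule.Quotient.mk_eq_zero] using this
  · intro h
    funext s
    simpa [kmap_apply, Submodule.Quotient.mk_eq_zero] using h s

lemma kmap_mkQ_surjective (i : ℕ) :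
    Function.Surjective (kmap (n := n) Q.mkQ i) := by
  intro g
  choose f hf using fun s => Submodule.Quotient.mk_surjective Q (g s)
  exact ⟨f, funext fun s => hf s⟩

lemma mem_smul_top_iff' (y : R) (m : M) :
    m ∈ y • (⊤ : Submodule R M) ↔ ∃ m', y • m' = m := by
  rw [← SetLike.mem_coe, Submodule.coe_pointwise_smul, Set.mem_smul_set]
  simp

lemma exists_smul_eq_of_forall_mem {i : ℕ} (y : R) (f : KoszulTerm R M n i)
    (h : ∀ s, f s ∈ y • (⊤ : Submodule R M)) :
    ∃ g : KoszulTerm R M n i, y • g = f := by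
  choose g hg using fun s => (mem_smul_top_iff' y (f s)).mp (h s)
  exact ⟨g, funext fun s => hg s⟩

end KoszulProof
end Part3

section Part4
namespace KoszulProof

open Pointwise

variable {R : Type*} [CommRing R] {n : ℕ} {M : Type*}
  [AddCommGroup M] [Module R M]
variable (x : Fin n → R)

lemma koszulBoundary_zero : koszulBoundary R M x 0 = ⊥ := rfl

lemma koszulBoundary_succ (i : ℕ) :
    koszulBoundary R M x (i + 1) = LinearMap.range (koszulD R M x i) := rfl

lemma smul_regular_cancel {y : R} (hy : IsSMulRegular M y) {i : ℕ}
    {f g : KoszulTerm R M n i} (h : y • f = y • g) : f = g :=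
  funext fun s => hy (congrFun h s)

lemma koszulD_zero_apply (f : KoszulTerm R M n 0) (j : Fin n) (h : ({j} : Finset (Fin n)).card = 1) :
    koszulD R M x 0 f ⟨{j}, h⟩ = x j • f ⟨∅, rfl⟩ := by
  rw [koszulD_apply' x f {j} h]
  have hmem : (⟨j, Finset.mem_singleton_self j⟩ : {a // a ∈ ({j} : Finset (Fin n))})
      ∈ ({j} : Finset (Fin n)).attach := Finset.mem_attach _ _
  rw [Finset.sum_eq_single_of_mem _ hmem (fun b _ hb => absurd
      (Subtype.ext (Finset.mem_singleton.mp b.property)) hb)]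
  have hk : ksgn R j {j} = 1 := by
    simp [ksgn, Finset.filter_singleton, lt_irrefl]
  rw [hk, one_mul, Finset.erase_singleton]
  rw [hat, dif_pos Finset.card_empty]

lemma ker_koszulD_zero_iff (f : KoszulTerm R M n 0) :
    koszulD R M x 0 f = 0 ↔ ∀ j : Fin n, x j • f ⟨∅, rfl⟩ = 0 := by
  constructor
  · intro hf j
    have := congrFun (smul_cocycle_zero x f hf j) ⟨∅, rfl⟩
    simpa using this
  · intro h
    funext t
    obtain ⟨t, ht⟩ := t
    obtain ⟨j, rfl⟩ := Finset.card_eq_one.mp ht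
    rw [koszulD_zero_apply x f j ht]
    simpa using h j

section Step

variable {y : R}

lemma kmap_smul_self_eq_zero {i : ℕ} (f : KoszulTerm R M n i) :
    kmap (y • (⊤ : Submodule R M)).mkQ i (y • f) = 0 :=
  (kmap_mkQ_eq_zero_iff _ _).mpr fun s =>
    Submodule.smul_mem_pointwise_smul _ _ _ Submodule.mem_top

lemma vanish_zero (hy : IsSMulRegular M y) (hyI : y ∈ Ideal.span (Set.range x)) :
    LinearMap.ker (koszulD R M x 0) ≤ koszulBoundary R M x 0 := by
  intro f hf
  rw [LinearMap.mem_ker] at hf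
  have h0 : y • f = 0 := by
    have h := smul_mem_boundary x f hf hyI
    rw [koszulBoundary_zero, Submodule.mem_bot] at h
    exact h
  have hf0 : f = 0 := smul_regular_cancel hy (by rw [h0, smul_zero])
  rw [koszulBoundary_zero, Submodule.mem_bot]
  exact hf0

lemma vanish_succ {i : ℕ} (hy : IsSMulRegular M y) (hyI : y ∈ Ideal.span (Set.range x))
    (hvan' : LinearMap.ker (koszulD R (QuotSMulTop y M) x i)
      ≤ koszulBoundary R (QuotSMulTop y M) x i) :
    LinearMap.ker (koszulD R M x (i + 1)) ≤ koszulBoundary R M x (i + 1) := by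
  set Q : Submodule R M := y • (⊤ : Submodule R M) with hQ
  intro f hf
  rw [LinearMap.mem_ker] at hf
  have hb := smul_mem_boundary x f hf hyI
  rw [koszulBoundary_succ] at hb
  obtain ⟨g, hg⟩ := hb
  have hcoc : koszulD R (QuotSMulTop y M) x i (kmap Q.mkQ i g) = 0 := by
    rw [← kmap_koszulD, hg]
    exact kmap_smul_self_eq_zero f
  have hmem' := hvan' (LinearMap.mem_ker.mpr hcoc)
  rw [koszulBoundary_succ]
  cases i with
  | zero =>
    rw [koszulBoundary_zero, Submodule.mem_bot] at hmem'
    obtain ⟨g₀, hg₀⟩ := exists_smul_eq_of_forall_mem y g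
      ((kmap_mkQ_eq_zero_iff Q g).mp hmem')
    refine ⟨g₀, smul_regular_cancel hy ?_⟩
    rw [← map_smul, hg₀, hg]
  | succ i' =>
    rw [koszulBoundary_succ] at hmem'
    obtain ⟨h', hh'⟩ := hmem'
    obtain ⟨h, rfl⟩ := kmap_mkQ_surjective Q i' h'
    have hsub : kmap Q.mkQ (i' + 1) (g - koszulD R M x i' h) = 0 := by
      rw [map_sub, kmap_koszulD, hh', sub_self]
    obtain ⟨g₀, hg₀⟩ := exists_smul_eq_of_forall_mem y _
      ((kmap_mkQ_eq_zero_iff Q _).mp hsub)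
    refine ⟨g₀, smul_regular_cancel hy ?_⟩
    rw [← map_smul, hg₀, map_sub, koszulD_koszulD, sub_zero, hg]

set_option maxHeartbeats 1000000 in
/-- The connecting isomorphism `H^m(M/yM) ≃ H^{m+1}(M)`. -/
lemma step_iso {m : ℕ} (hy : IsSMulRegular M y) (hyI : y ∈ Ideal.span (Set.range x))
    (hvanM : LinearMap.ker (koszulD R M x m) ≤ koszulBoundary R M x m) :
    Nonempty
      ((LinearMap.ker (koszulD R (QuotSMulTop y M) x m) ⧸
          (koszulBoundary R (QuotSMulTop y M) x m).comap
            (LinearMap.ker (koszulD R (QuotSMulTop y M) x m)).subtype)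
        ≃ₗ[R]
       (LinearMap.ker (koszulD R M x (m + 1)) ⧸
          (koszulBoundary R M x (m + 1)).comap
            (LinearMap.ker (koszulD R M x (m + 1))).subtype)) := by
  classical
  set Q : Submodule R M := y • (⊤ : Submodule R M) with hQ
  set M' := QuotSMulTop y M with hM'
  -- the submodule of pairs (f, F) with d f = y • F
  set L : (KoszulTerm R M n m × KoszulTerm R M n (m + 1)) →ₗ[R] KoszulTerm R M n (m + 1) :=
    (koszulD R M x m).comp (LinearMap.fst R _ _) - y • LinearMap.snd R _ _ with hL
  set Z := LinearMap.ker L with hZ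
  have hZ_mem : ∀ z : Z, koszulD R M x m z.val.1 = y • z.val.2 := by
    intro z
    have h0 : L z.val = 0 := z.property
    rw [hL] at h0
    simp only [LinearMap.sub_apply, LinearMap.comp_apply, LinearMap.smul_apply,
      LinearMap.fst_apply, LinearMap.snd_apply, sub_eq_zero] at h0
    exact h0
  have hZ_mk : ∀ (f : KoszulTerm R M n m) (F : KoszulTerm R M n (m + 1)),
      koszulD R M x m f = y • F → (f, F) ∈ Z := by
    intro f F hfF
    show L (f, F) = 0
    rw [hL]
    simp only [LinearMap.sub_apply, LinearMap.comp_apply, LinearMap.smul_apply,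
      LinearMap.fst_apply, LinearMap.snd_apply, sub_eq_zero]
    exact hfF
  -- Map into cocycles of M' in degree m
  have hmap1 : ∀ z : Z, koszulD R M' x m (kmap Q.mkQ m z.val.1) = 0 := by
    intro z
    rw [← kmap_koszulD, hZ_mem z]
    exact kmap_smul_self_eq_zero z.val.2
  have hmap2 : ∀ z : Z, koszulD R M x (m + 1) z.val.2 = 0 := by
    intro z
    refine smul_regular_cancel hy (g := 0) ?_
    rw [smul_zero, ← map_smul, ← hZ_mem z, koszulD_koszulD]
  set Map1 : Z →ₗ[R] LinearMap.ker (koszulD R M' x m) :=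
    LinearMap.codRestrict _ ((kmap Q.mkQ m).comp ((LinearMap.fst R _ _).comp Z.subtype))
      (fun z => LinearMap.mem_ker.mpr (hmap1 z)) with hMap1
  set Map2 : Z →ₗ[R] LinearMap.ker (koszulD R M x (m + 1)) :=
    LinearMap.codRestrict _ ((LinearMap.snd R _ _).comp Z.subtype)
      (fun z => LinearMap.mem_ker.mpr (hmap2 z)) with hMap2
  set B' := (koszulBoundary R M' x m).comap (LinearMap.ker (koszulD R M' x m)).subtype
  set B := (koszulBoundary R M x (m + 1)).comap
    (LinearMap.ker (koszulD R M x (m + 1))).subtype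
  set q1 : Z →ₗ[R] _ := B'.mkQ.comp Map1 with hq1
  set q2 : Z →ₗ[R] _ := B.mkQ.comp Map2 with hq2
  -- surjectivity of q1
  have hq1surj : Function.Surjective q1 := by
    intro c
    obtain ⟨⟨f', hf'⟩, rfl⟩ := B'.mkQ_surjective c
    obtain ⟨f, rfl⟩ := kmap_mkQ_surjective Q m f'
    rw [LinearMap.mem_ker, ← kmap_koszulD] at hf'
    obtain ⟨F, hF⟩ := exists_smul_eq_of_forall_mem y _
      ((kmap_mkQ_eq_zero_iff Q _).mp hf')
    exact ⟨⟨(f, F), hZ_mk f F hF.symm⟩, rfl⟩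
  -- surjectivity of q2
  have hq2surj : Function.Surjective q2 := by
    intro c
    obtain ⟨⟨F, hF⟩, rfl⟩ := B.mkQ_surjective c
    have hFc : koszulD R M x (m + 1) F = 0 := LinearMap.mem_ker.mp hF
    have hb := smul_mem_boundary x F hFc hyI
    rw [koszulBoundary_succ] at hb
    obtain ⟨f, hf⟩ := hb
    exact ⟨⟨(f, F), hZ_mk f F hf⟩, rfl⟩
  -- the two kernels agree
  have hker : LinearMap.ker q1 = LinearMap.ker q2 := by
    ext z
    rw [LinearMap.mem_ker, LinearMap.mem_ker, hq1, hq2, LinearMap.comp_apply,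
      LinearMap.comp_apply, Submodule.mkQ_apply, Submodule.mkQ_apply,
      Submodule.Quotient.mk_eq_zero, Submodule.Quotient.mk_eq_zero]
    show kmap Q.mkQ m z.val.1 ∈ koszulBoundary R M' x m ↔
      z.val.2 ∈ koszulBoundary R M x (m + 1)
    have hdf : koszulD R M x m z.val.1 = y • z.val.2 := hZ_mem z
    obtain ⟨⟨f, F⟩, hz⟩ := z
    simp only at hdf ⊢
    constructor
    · intro h1
      rw [koszulBoundary_succ]
      cases m with
      | zero =>
        rw [koszulBoundary_zero, Submodule.mem_bot] at h1
        obtain ⟨g₀, hg₀⟩ := exists_smul_eq_of_forall_mem y f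
          ((kmap_mkQ_eq_zero_iff Q f).mp h1)
        refine ⟨g₀, smul_regular_cancel hy ?_⟩
        rw [← map_smul, hg₀, hdf]
      | succ m' =>
        rw [koszulBoundary_succ] at h1
        obtain ⟨h', hh'⟩ := h1
        obtain ⟨h, rfl⟩ := kmap_mkQ_surjective Q m' h'
        have hsub : kmap Q.mkQ (m' + 1) (f - koszulD R M x m' h) = 0 := by
          rw [map_sub, kmap_koszulD, hh', sub_self]
        obtain ⟨g₀, hg₀⟩ := exists_smul_eq_of_forall_mem y _
          ((kmap_mkQ_eq_zero_iff Q _).mp hsub)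
        refine ⟨g₀, smul_regular_cancel hy ?_⟩
        rw [← map_smul, hg₀, map_sub, koszulD_koszulD, sub_zero, hdf]
    · intro h2
      rw [koszulBoundary_succ] at h2
      obtain ⟨G, hG⟩ := h2
      have hcoc : f - y • G ∈ LinearMap.ker (koszulD R M x m) := by
        rw [LinearMap.mem_ker, map_sub, map_smul, hG, hdf, sub_self]
      have hmem := hvanM hcoc
      cases m with
      | zero =>
        rw [koszulBoundary_zero, Submodule.mem_bot, sub_eq_zero] at hmem
        rw [koszulBoundary_zero, Submodule.mem_bot, hmem]
        exact kmap_smul_self_eq_zero G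
      | succ m' =>
        rw [koszulBoundary_succ] at hmem
        obtain ⟨h, hh⟩ := hmem
        rw [koszulBoundary_succ]
        refine ⟨kmap Q.mkQ m' h, ?_⟩
        rw [← kmap_koszulD, hh, map_sub]
        rw [show kmap Q.mkQ (m' + 1) (y • G) = 0 from kmap_smul_self_eq_zero G,
          sub_zero]
    -- done
  exact ⟨(q1.quotKerEquivOfSurjective hq1surj).symm.trans
    ((Submodule.quotEquivOfEq _ _ hker).trans
      (q2.quotKerEquivOfSurjective hq2surj))⟩

end Step

end KoszulProof
end Part4

section Part5
namespace KoszulProof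

open Pointwise Submodule

universe v

variable {R : Type*} [CommRing R] {n : ℕ}

instance instUniqueCardZero : Unique {s : Finset (Fin n) // s.card = 0} :=
  ⟨⟨⟨∅, Finset.card_empty⟩⟩, fun s => Subtype.ext (Finset.card_eq_zero.mp s.property)⟩

lemma NP_transfer (x : Fin n → R) (y : R) (rs' : List R)
    (M : Type v) [AddCommGroup M] [Module R M] :
    Nonempty
      ((↥(⨅ i : Fin n, Submodule.comap (LinearMap.lsmul R (QuotSMulTop y M) (x i))
          (Ideal.ofList rs' • ⊤)) ⧸
        ((Ideal.ofList rs' • ⊤ : Submodule R (QuotSMulTop y M)).comap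
          (⨅ i : Fin n, Submodule.comap (LinearMap.lsmul R (QuotSMulTop y M) (x i))
            (Ideal.ofList rs' • ⊤)).subtype))
      ≃ₗ[R]
      (↥(⨅ i : Fin n, Submodule.comap (LinearMap.lsmul R M (x i))
          (Ideal.ofList (y :: rs') • ⊤)) ⧸
        ((Ideal.ofList (y :: rs') • ⊤ : Submodule R M).comap
          (⨅ i : Fin n, Submodule.comap (LinearMap.lsmul R M (x i))
            (Ideal.ofList (y :: rs') • ⊤)).subtype))) := by
  classical
  set Q : Submodule R M := y • (⊤ : Submodule R M) with hQdef
  set P : Submodule R M := Ideal.ofList (y :: rs') • ⊤ with hPdef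
  set P' : Submodule R (QuotSMulTop y M) := Ideal.ofList rs' • ⊤ with hP'def
  set N : Submodule R M := ⨅ i : Fin n, Submodule.comap (LinearMap.lsmul R M (x i)) P
    with hNdef
  set N' : Submodule R (QuotSMulTop y M) :=
    ⨅ i : Fin n, Submodule.comap (LinearMap.lsmul R (QuotSMulTop y M) (x i)) P'
    with hN'def
  have hPcomap : P'.comap Q.mkQ = P := by
    have h1 : Submodule.map Q.mkQ (Ideal.ofList rs' • ⊤ : Submodule R M) = P' := by
      rw [hP'def, Submodule.map_smul'', Submodule.map_top, Submodule.range_mkQ]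
    rw [← h1, Submodule.comap_map_eq, Submodule.ker_mkQ, hPdef,
      Ideal.ofList_cons_smul]
    exact sup_comm _ _
  have hNcomap : N'.comap Q.mkQ = N := by
    ext m
    simp only [hNdef, hN'def, Submodule.mem_comap, Submodule.mem_iInf,
      LinearMap.lsmul_apply]
    refine forall_congr' fun i => ?_
    show x i • Q.mkQ m ∈ P' ↔ x i • m ∈ P
    rw [show x i • Q.mkQ m = Q.mkQ (x i • m) from (map_smul Q.mkQ (x i) m).symm,
      ← Submodule.mem_comap, hPcomap]
  let φ0 : N →ₗ[R] QuotSMulTop y M := Q.mkQ.comp N.subtype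
  have hφ0 : ∀ m : N, φ0 m ∈ N' := by
    intro m
    have hm : (m : M) ∈ N'.comap Q.mkQ := by rw [hNcomap]; exact m.property
    exact hm
  let φ : N →ₗ[R] (N' ⧸ P'.comap N'.subtype) :=
    (P'.comap N'.subtype).mkQ.comp (φ0.codRestrict N' hφ0)
  have hφsurj : Function.Surjective φ := by
    intro c
    obtain ⟨⟨m', hm'⟩, rfl⟩ := (P'.comap N'.subtype).mkQ_surjective c
    obtain ⟨m, hm⟩ := Q.mkQ_surjective m'
    have hmN : m ∈ N := by
      rw [← hNcomap]
      show Q.mkQ m ∈ N'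
      rw [hm]; exact hm'
    refine ⟨⟨m, hmN⟩, ?_⟩
    show (P'.comap N'.subtype).mkQ ⟨Q.mkQ m, _⟩ = (P'.comap N'.subtype).mkQ ⟨m', hm'⟩
    congr 1
    exact Subtype.ext hm
  have hφker : LinearMap.ker φ = P.comap N.subtype := by
    ext m
    show φ m = 0 ↔ (m : M) ∈ P
    have : φ m = (P'.comap N'.subtype).mkQ ⟨Q.mkQ m.val, hφ0 m⟩ := rfl
    rw [this, Submodule.mkQ_apply, Submodule.Quotient.mk_eq_zero, Submodule.mem_comap]
    show Q.mkQ m.val ∈ P' ↔ (m : M) ∈ P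
    rw [← Submodule.mem_comap, hPcomap]
  exact ⟨((Submodule.quotEquivOfEq _ _ hφker.symm).trans
    (φ.quotKerEquivOfSurjective hφsurj)).symm⟩

theorem koszul_main (x : Fin n → R) (rs : List R) :
    ∀ (M : Type v) [AddCommGroup M] [Module R M],
      (∀ y ∈ rs, y ∈ Ideal.span (Set.range x)) →
      RingTheory.Sequence.IsWeaklyRegular M rs →
      (∀ i < rs.length,
        LinearMap.ker (koszulD R M x i) ≤ koszulBoundary R M x i) ∧
      Nonempty ((LinearMap.ker (koszulD R M x rs.length) ⧸
          (koszulBoundary R M x rs.length).comap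
            (LinearMap.ker (koszulD R M x rs.length)).subtype)
        ≃ₗ[R]
        (↥(⨅ i : Fin n, Submodule.comap (LinearMap.lsmul R M (x i))
            (Ideal.ofList rs • ⊤)) ⧸
          ((Ideal.ofList rs • ⊤ : Submodule R M).comap
            (⨅ i : Fin n, Submodule.comap (LinearMap.lsmul R M (x i))
              (Ideal.ofList rs • ⊤)).subtype))) := by
  induction rs with
  | nil =>
    intro M _ _ _ _
    refine ⟨fun i hi => absurd hi (by simp), ?_⟩
    have hP0 : (Ideal.ofList ([] : List R) • ⊤ : Submodule R M) = ⊥ := by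
      rw [Ideal.ofList_nil, bot_smul]
    have h1 : (koszulBoundary R M x 0).comap
        (LinearMap.ker (koszulD R M x 0)).subtype = ⊥ := by
      rw [koszulBoundary_zero, Submodule.comap_bot, Submodule.ker_subtype]
    have h2 : ((Ideal.ofList ([] : List R) • ⊤ : Submodule R M)).comap
        (⨅ i : Fin n, Submodule.comap (LinearMap.lsmul R M (x i))
          (Ideal.ofList ([] : List R) • ⊤)).subtype = ⊥ := by
      rw [hP0, Submodule.comap_bot, Submodule.ker_subtype]
    let e0 : KoszulTerm R M n 0 ≃ₗ[R] M :=
      LinearEquiv.funUnique {s : Finset (Fin n) // s.card = 0} R M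
    have hmap : (LinearMap.ker (koszulD R M x 0)).map (e0 : KoszulTerm R M n 0 →ₗ[R] M)
        = ⨅ i : Fin n, Submodule.comap (LinearMap.lsmul R M (x i))
            (Ideal.ofList ([] : List R) • ⊤) := by
      ext m
      simp only [Submodule.mem_map, LinearMap.mem_ker, Submodule.mem_iInf,
        Submodule.mem_comap, LinearMap.lsmul_apply, hP0, Submodule.mem_bot]
      constructor
      · rintro ⟨f, hf, rfl⟩ i
        have := (ker_koszulD_zero_iff x f).mp hf i
        simp [e0, LinearEquiv.funUnique]
        exact this
      · intro h
        refine ⟨fun _ => m, ?_, ?_⟩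
        · rw [ker_koszulD_zero_iff]
          intro j
          simpa using h j
        · simp [e0, LinearEquiv.funUnique]
    exact ⟨(Submodule.quotEquivOfEqBot _ h1).trans
      (((e0.submoduleMap (LinearMap.ker (koszulD R M x 0))).trans
        (LinearEquiv.ofEq _ _ hmap)).trans (Submodule.quotEquivOfEqBot _ h2).symm)⟩
  | cons y rs' ih =>
    intro M _ _ hmemI hreg
    rw [RingTheory.Sequence.isWeaklyRegular_cons_iff] at hreg
    obtain ⟨hy, hreg'⟩ := hreg
    have hyI : y ∈ Ideal.span (Set.range x) := hmemI y List.mem_cons_self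
    have hmemI' : ∀ z ∈ rs', z ∈ Ideal.span (Set.range x) := fun z hz =>
      hmemI z (List.mem_cons_of_mem y hz)
    obtain ⟨van', iso'⟩ := ih (QuotSMulTop y M) hmemI' hreg'
    have van : ∀ i < (y :: rs').length,
        LinearMap.ker (koszulD R M x i) ≤ koszulBoundary R M x i := by
      intro i hi
      cases i with
      | zero => exact vanish_zero x hy hyI
      | succ i' =>
        exact vanish_succ x hy hyI (van' i' (by simpa using hi))
    refine ⟨van, ?_⟩
    obtain ⟨e1⟩ := step_iso x hy hyI (van rs'.length (by simp))
    obtain ⟨e2⟩ := iso'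
    obtain ⟨e3⟩ := NP_transfer x y rs' M
    exact ⟨(e1.symm.trans e2).trans e3⟩

end KoszulProof
end Part5


open RingTheory.Sequence in
/-- If `x 0, …, x (r-1)` is an `M`-regular sequence, then the `r`-th Koszul
cohomology `H^r(M ⊗ K(x 0, …, x (n-1)))` is isomorphic to
`{m ∈ M : m·I ⊆ Σ_{i<r} xᵢM} / Σ_{i<r} xᵢM`, where `I = Σ_{i<n} xᵢR`. -/
theorem koszul_cohomology_of_regular_sequence
    (R : Type*) [CommRing R] [IsNoetherianRing R]
    (M : Type*) [AddCommGroup M] [Module R M]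
    (n r : ℕ) (hr : r ≤ n) (x : Fin n → R)
    (hreg : IsWeaklyRegular M ((List.ofFn x).take r))
    (P : Submodule R M) (hP : P = Ideal.ofList ((List.ofFn x).take r) • ⊤)
    (N : Submodule R M)
    (hN : N = ⨅ i : Fin n, Submodule.comap (LinearMap.lsmul R M (x i)) P) :
    Nonempty
      ((LinearMap.ker (koszulD R M x r) ⧸
          (koszulBoundary R M x r).comap (LinearMap.ker (koszulD R M x r)).subtype)
        ≃ₗ[R] (N ⧸ P.comap N.subtype)) := by
  subst hN
  subst hP
  set rs : List R := (List.ofFn x).take r with hrs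
  have hmem : ∀ y ∈ rs, y ∈ Ideal.span (Set.range x) := by
    intro y hy
    have h1 : y ∈ List.ofFn x := List.mem_of_mem_take hy
    exact Ideal.subset_span (List.mem_ofFn.mp h1)
  have hlen : rs.length = r := by
    rw [hrs, List.length_take, List.length_ofFn]
    exact min_eq_left hr
  rw [← hlen]
  exact (KoszulProof.koszul_main x rs M hmem hreg).2
end

section
/- Let R be a commutative noetherian ring, M an R-module, and x_1, …, x_n ∈ R such that x_1, …, x_r is an M-regular sequence for some r ≤ n. Then H^j(M ⊗_R K(x_1, …, x_n)) = 0 for all j < r. -/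
namespace KAux

variable {R M : Type*} [CommRing R] [AddCommGroup M] [Module R M]

lemma kapp {n i : ℕ} (f : KoszulTerm R M n i) {A B : Finset (Fin n)}
    (hA : A.card = i) (hB : B.card = i) (h : A = B) : f ⟨A, hA⟩ = f ⟨B, hB⟩ := by
  cases h; rfl

/-- uncurried version of a cochain, avoiding dependent subtype proofs. -/
noncomputable def uf {n i : ℕ} (f : KoszulTerm R M n i) : Finset (Fin n) → M :=
  fun A => if h : A.card = i then f ⟨A, h⟩ else 0

lemma uf_eq {n i : ℕ} (f : KoszulTerm R M n i) (A : Finset (Fin n))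
    (h : A.card = i) : f ⟨A, h⟩ = uf f A := by rw [uf, dif_pos h]

lemma koszulD_apply {n : ℕ} (x : Fin n → R) (i : ℕ) (f : KoszulTerm R M n i)
    (t : {s : Finset (Fin n) // s.card = i + 1}) :
    koszulD R M x i f t = ∑ j ∈ Finset.univ, if j ∈ t.val then
      ((-1 : R) ^ ((t.val.filter (fun a => a < j)).card) * x j) •
        uf f (t.val.erase j)
      else 0 := by
  have h1 : koszulD R M x i f t = ∑ j ∈ t.val.attach,
      ((-1 : R) ^ ((t.val.filter (fun a => a < j.val)).card) * x j.val) •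
        f ⟨t.val.erase j.val, by
          simp [Finset.card_erase_of_mem j.property, t.property]⟩ := by
    simp [koszulD, LinearMap.pi_apply, LinearMap.sum_apply, LinearMap.smul_apply,
      LinearMap.proj_apply]
  rw [h1]
  rw [show (∑ j ∈ Finset.univ, if j ∈ t.val then
      ((-1 : R) ^ ((t.val.filter (fun a => a < j)).card) * x j) •
        uf f (t.val.erase j) else 0) = ∑ j ∈ t.val, (if j ∈ t.val then
      ((-1 : R) ^ ((t.val.filter (fun a => a < j)).card) * x j) •
        uf f (t.val.erase j) else 0) from
    (Finset.sum_subset (Finset.subset_univ _) (fun j _ hj => if_neg hj)).symm]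
  rw [← Finset.sum_attach t.val (fun j => if j ∈ t.val then
      ((-1 : R) ^ ((t.val.filter (fun a => a < j)).card) * x j) •
        uf f (t.val.erase j) else 0)]
  apply Finset.sum_congr rfl
  intro j _
  simp only [if_pos j.property]
  exact congrArg
    (fun m => ((-1 : R) ^ ((t.val.filter (fun a => a < j.val)).card) * x j.val) • m)
    (uf_eq f _ (by simp [Finset.card_erase_of_mem j.property, t.property]))

/-- pull-back of a subset of `Fin (n+1)` to `Fin n`. -/
def pull {n : ℕ} (t : Finset (Fin (n + 1))) : Finset (Fin n) :=
  Finset.filter (fun i => i.castSucc ∈ t) Finset.univ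

lemma mem_pull {n : ℕ} {t : Finset (Fin (n + 1))} {a : Fin n} :
    a ∈ pull t ↔ a.castSucc ∈ t := by simp [pull]

lemma pull_map {n : ℕ} (s : Finset (Fin n)) : pull (s.map Fin.castSuccEmb) = s := by
  ext a
  simp only [mem_pull, Finset.mem_map, Fin.castSuccEmb, Function.Embedding.coeFn_mk]
  exact ⟨fun ⟨b, hb, h⟩ => (Fin.castSucc_injective n h) ▸ hb, fun h => ⟨a, h, rfl⟩⟩

lemma map_pull {n : ℕ} {t : Finset (Fin (n + 1))} (h : Fin.last n ∉ t) :
    (pull t).map Fin.castSuccEmb = t := by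
  ext a
  simp only [Finset.mem_map, mem_pull, Fin.castSuccEmb, Function.Embedding.coeFn_mk]
  constructor
  · rintro ⟨b, hb, rfl⟩; exact hb
  · intro ha
    have hne : a ≠ Fin.last n := fun he => h (he ▸ ha)
    obtain ⟨b, rfl⟩ := Fin.exists_castSucc_eq.2 hne
    exact ⟨b, ha, rfl⟩

lemma card_pull {n : ℕ} {t : Finset (Fin (n + 1))} (h : Fin.last n ∉ t) :
    (pull t).card = t.card := by
  rw [← map_pull h, Finset.card_map, pull_map]

lemma last_not_mem_map {n : ℕ} (s : Finset (Fin n)) :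
    Fin.last n ∉ s.map Fin.castSuccEmb := by
  simp only [Finset.mem_map, Fin.castSuccEmb, Function.Embedding.coeFn_mk]
  rintro ⟨b, -, hb⟩
  exact absurd hb (Fin.castSucc_lt_last b).ne

lemma card_map_castSucc {n i : ℕ} (s : {s : Finset (Fin n) // s.card = i}) :
    (s.val.map Fin.castSuccEmb).card = i := by rw [Finset.card_map, s.property]

lemma card_insert_last {n i : ℕ} (s : {s : Finset (Fin n) // s.card = i}) :
    (insert (Fin.last n) (s.val.map Fin.castSuccEmb)).card = i + 1 := by
  rw [Finset.card_insert_of_notMem (last_not_mem_map _), Finset.card_map, s.property]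

/-- restriction to subsets avoiding `last`. -/
noncomputable def res (n i : ℕ) :
    KoszulTerm R M (n + 1) i →ₗ[R] KoszulTerm R M n i :=
  LinearMap.pi fun s => LinearMap.proj ⟨s.val.map Fin.castSuccEmb, card_map_castSucc s⟩

/-- component on subsets containing `last`. -/
noncomputable def top (n i : ℕ) :
    KoszulTerm R M (n + 1) (i + 1) →ₗ[R] KoszulTerm R M n i :=
  LinearMap.pi fun s =>
    LinearMap.proj ⟨insert (Fin.last n) (s.val.map Fin.castSuccEmb), card_insert_last s⟩

@[simp] lemma res_apply {n i : ℕ} (f : KoszulTerm R M (n + 1) i)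
    (s : {s : Finset (Fin n) // s.card = i}) :
    res n i f s = f ⟨s.val.map Fin.castSuccEmb, card_map_castSucc s⟩ := rfl

@[simp] lemma top_apply {n i : ℕ} (f : KoszulTerm R M (n + 1) (i + 1))
    (s : {s : Finset (Fin n) // s.card = i}) :
    top n i f s = f ⟨insert (Fin.last n) (s.val.map Fin.castSuccEmb),
      card_insert_last s⟩ := rfl

/-- extension by zero on subsets containing `last`. -/
noncomputable def ext0 (n i : ℕ) :
    KoszulTerm R M n i →ₗ[R] KoszulTerm R M (n + 1) i :=
  LinearMap.pi fun t =>
    if h : Fin.last n ∈ t.val then 0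
    else LinearMap.proj ⟨pull t.val, by rw [card_pull h, t.property]⟩

/-- extension by zero on subsets avoiding `last`. -/
noncomputable def ext1 (n i : ℕ) :
    KoszulTerm R M n i →ₗ[R] KoszulTerm R M (n + 1) (i + 1) :=
  LinearMap.pi fun t =>
    if h : Fin.last n ∈ t.val then
      LinearMap.proj ⟨pull (t.val.erase (Fin.last n)), by
        rw [card_pull (Finset.notMem_erase _ _),
          Finset.card_erase_of_mem h, t.property]; rfl⟩
    else 0

lemma ext0_apply_of_not_mem {n i : ℕ} (g : KoszulTerm R M n i)
    (t : {s : Finset (Fin (n+1)) // s.card = i}) (h : Fin.last n ∉ t.val) :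
    ext0 n i g t = g ⟨pull t.val, by rw [card_pull h, t.property]⟩ := by
  simp [ext0, LinearMap.pi_apply, dif_neg h]

lemma ext0_apply_of_mem {n i : ℕ} (g : KoszulTerm R M n i)
    (t : {s : Finset (Fin (n+1)) // s.card = i}) (h : Fin.last n ∈ t.val) :
    ext0 n i g t = 0 := by
  simp [ext0, LinearMap.pi_apply, dif_pos h]

lemma ext1_apply_of_mem {n i : ℕ} (g : KoszulTerm R M n i)
    (t : {s : Finset (Fin (n+1)) // s.card = i + 1}) (h : Fin.last n ∈ t.val) :
    ext1 n i g t = g ⟨pull (t.val.erase (Fin.last n)), by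
      rw [card_pull (Finset.notMem_erase _ _), Finset.card_erase_of_mem h,
        t.property]; rfl⟩ := by
  simp [ext1, LinearMap.pi_apply, dif_pos h]

lemma ext1_apply_of_not_mem {n i : ℕ} (g : KoszulTerm R M n i)
    (t : {s : Finset (Fin (n+1)) // s.card = i + 1}) (h : Fin.last n ∉ t.val) :
    ext1 n i g t = 0 := by
  simp [ext1, LinearMap.pi_apply, dif_neg h]

@[simp] lemma castSuccEmb_coe {n : ℕ} (a : Fin n) :
    (Fin.castSuccEmb : Fin n ↪ Fin (n + 1)) a = a.castSucc := rfl

lemma mem_map_castSucc {n : ℕ} {s : Finset (Fin n)} {a : Fin n} :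
    a.castSucc ∈ s.map Fin.castSuccEmb ↔ a ∈ s := Finset.mem_map' _

lemma filter_lt_map {n : ℕ} (s : Finset (Fin n)) (j : Fin n) :
    (s.map Fin.castSuccEmb).filter (fun a => a < j.castSucc) =
      (s.filter (fun a => a < j)).map Fin.castSuccEmb := by
  ext a
  simp only [Finset.mem_filter, Finset.mem_map, castSuccEmb_coe]
  constructor
  · rintro ⟨⟨b, hb, rfl⟩, hlt⟩
    exact ⟨b, ⟨hb, Fin.castSucc_lt_castSucc_iff.mp hlt⟩, rfl⟩
  · rintro ⟨b, ⟨hb, hlt⟩, rfl⟩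
    exact ⟨⟨b, hb, rfl⟩, Fin.castSucc_lt_castSucc_iff.mpr hlt⟩

lemma card_filter_lt_map {n : ℕ} (s : Finset (Fin n)) (j : Fin n) :
    ((s.map Fin.castSuccEmb).filter (fun a => a < j.castSucc)).card =
      (s.filter (fun a => a < j)).card := by
  rw [filter_lt_map, Finset.card_map]

lemma erase_map_castSucc {n : ℕ} (s : Finset (Fin n)) (j : Fin n) :
    (s.map Fin.castSuccEmb).erase j.castSucc = (s.erase j).map Fin.castSuccEmb :=
  (Finset.map_erase _ s j).symm

lemma filter_lt_insert_last {n : ℕ} (s : Finset (Fin n)) (j : Fin n) :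
    ((insert (Fin.last n) (s.map Fin.castSuccEmb)).filter
        (fun a => a < j.castSucc)).card = (s.filter (fun a => a < j)).card := by
  rw [Finset.filter_insert, if_neg (Fin.castSucc_lt_last j).asymm,
    card_filter_lt_map]

lemma filter_lt_last {n : ℕ} (s : Finset (Fin n)) :
    ((insert (Fin.last n) (s.map Fin.castSuccEmb)).filter
        (fun a => a < Fin.last n)).card = s.card := by
  rw [Finset.filter_insert, if_neg (lt_irrefl _)]
  rw [Finset.filter_true_of_mem, Finset.card_map]
  intro a ha
  obtain ⟨b, _, rfl⟩ := Finset.mem_map.mp ha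
  exact Fin.castSucc_lt_last b

lemma erase_insert_last {n : ℕ} (s : Finset (Fin n)) (j : Fin n) :
    (insert (Fin.last n) (s.map Fin.castSuccEmb)).erase j.castSucc =
      insert (Fin.last n) ((s.erase j).map Fin.castSuccEmb) := by
  rw [Finset.erase_insert_of_ne (Fin.castSucc_lt_last j).ne', erase_map_castSucc]

lemma erase_insert_last' {n : ℕ} (s : Finset (Fin n)) :
    (insert (Fin.last n) (s.map Fin.castSuccEmb)).erase (Fin.last n) =
      s.map Fin.castSuccEmb :=
  Finset.erase_insert (last_not_mem_map s)

/-- decomposition of a cochain in positive degree. -/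
lemma decompose {n i : ℕ} (f : KoszulTerm R M (n + 1) (i + 1)) :
    f = ext0 n (i + 1) (res n (i + 1) f) + ext1 n i (top n i f) := by
  funext t
  rw [Pi.add_apply]
  by_cases h : Fin.last n ∈ t.val
  · rw [ext0_apply_of_mem _ _ h, ext1_apply_of_mem _ _ h, zero_add,
      top_apply]
    refine (kapp f _ _ ?_).symm
    rw [map_pull (Finset.notMem_erase _ _), Finset.insert_erase h]
  · rw [ext0_apply_of_not_mem _ _ h, ext1_apply_of_not_mem _ _ h, add_zero,
      res_apply]
    refine (kapp f _ _ ?_).symm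
    rw [map_pull h]

lemma uf_res {n i : ℕ} (f : KoszulTerm R M (n + 1) i) (A : Finset (Fin n)) :
    uf (res n i f) A = uf f (A.map Fin.castSuccEmb) := by
  unfold uf
  by_cases h : A.card = i
  · rw [dif_pos h, dif_pos (by simp [h])]; rfl
  · rw [dif_neg h, dif_neg (by simp [h])]

lemma uf_top {n i : ℕ} (f : KoszulTerm R M (n + 1) (i + 1)) (A : Finset (Fin n)) :
    uf (top n i f) A = uf f (insert (Fin.last n) (A.map Fin.castSuccEmb)) := by
  unfold uf
  by_cases h : A.card = i
  · rw [dif_pos h,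
      dif_pos (by rw [Finset.card_insert_of_notMem (last_not_mem_map A),
        Finset.card_map, h])]
    rfl
  · rw [dif_neg h, dif_neg (by
      rw [Finset.card_insert_of_notMem (last_not_mem_map A), Finset.card_map]
      exact fun hc => h (Nat.succ_injective hc))]

lemma mem_insert_last {n : ℕ} {s : Finset (Fin n)} {a : Fin n} :
    a.castSucc ∈ insert (Fin.last n) (s.map Fin.castSuccEmb) ↔ a ∈ s := by
  rw [Finset.mem_insert, mem_map_castSucc]
  simp [(Fin.castSucc_lt_last a).ne]

/-- `res` commutes with the differential. -/
lemma res_koszulD {n i : ℕ} (x : Fin (n + 1) → R) (f : KoszulTerm R M (n + 1) i) :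
    res n (i + 1) (koszulD R M x i f) =
      koszulD R M (x ∘ Fin.castSucc) i (res n i f) := by
  funext s
  rw [res_apply, koszulD_apply, koszulD_apply, Fin.sum_univ_castSucc,
    if_neg (last_not_mem_map s.val), add_zero]
  apply Finset.sum_congr rfl
  intro j _
  by_cases hj : j ∈ s.val
  · rw [if_pos (mem_map_castSucc.mpr hj), if_pos hj, card_filter_lt_map,
      erase_map_castSucc, uf_res]
    rfl
  · rw [if_neg (fun hm => hj (mem_map_castSucc.mp hm)), if_neg hj]

/-- `top` versus the differential, in positive degree. -/
lemma top_koszulD {n i : ℕ} (x : Fin (n + 1) → R)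
    (f : KoszulTerm R M (n + 1) (i + 1)) :
    top n (i + 1) (koszulD R M x (i + 1) f) =
      koszulD R M (x ∘ Fin.castSucc) i (top n i f) +
        ((-1 : R) ^ (i + 1) * x (Fin.last n)) • res n (i + 1) f := by
  funext s
  rw [Pi.add_apply, Pi.smul_apply, top_apply, koszulD_apply, koszulD_apply,
    Fin.sum_univ_castSucc]
  congr 1
  · apply Finset.sum_congr rfl
    intro j _
    by_cases hj : j ∈ s.val
    · rw [if_pos (mem_insert_last.mpr hj), if_pos hj, filter_lt_insert_last,
        erase_insert_last, uf_top]
      rfl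
    · rw [if_neg (fun hm => hj (mem_insert_last.mp hm)), if_neg hj]
  · rw [if_pos (Finset.mem_insert_self _ _), filter_lt_last, s.property,
      erase_insert_last', res_apply,
      uf_eq f (Finset.map Fin.castSuccEmb s.val) (card_map_castSucc s)]

/-- `top` versus the differential, in degree zero. -/
lemma top_koszulD_zero {n : ℕ} (x : Fin (n + 1) → R) (f : KoszulTerm R M (n + 1) 0) :
    top n 0 (koszulD R M x 0 f) = x (Fin.last n) • res n 0 f := by
  funext s
  have hs : s.val = ∅ := Finset.card_eq_zero.mp s.property
  rw [Pi.smul_apply, top_apply, koszulD_apply, Fin.sum_univ_castSucc]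
  have hz : ∀ j : Fin n, j.castSucc ∉
      insert (Fin.last n) (s.val.map Fin.castSuccEmb) := by
    intro j hm
    rw [mem_insert_last, hs] at hm
    exact absurd hm (Finset.notMem_empty j)
  rw [Finset.sum_congr rfl (fun j _ => if_neg (hz j)), Finset.sum_const_zero,
    zero_add, if_pos (Finset.mem_insert_self _ _), filter_lt_last, s.property,
    erase_insert_last', res_apply,
    uf_eq f (Finset.map Fin.castSuccEmb s.val) (card_map_castSucc s), pow_zero, one_mul]

lemma res_ext0 {n i : ℕ} (a : KoszulTerm R M n i) : res n i (ext0 n i a) = a := by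
  funext s
  rw [res_apply, ext0_apply_of_not_mem _ _ (last_not_mem_map s.val)]
  exact kapp a _ s.property (pull_map s.val)

lemma top_ext0 {n i : ℕ} (a : KoszulTerm R M n (i + 1)) :
    top n i (ext0 n (i + 1) a) = 0 := by
  funext s
  rw [top_apply, ext0_apply_of_mem _ _ (Finset.mem_insert_self _ _)]
  rfl

lemma res_ext1 {n i : ℕ} (b : KoszulTerm R M n i) :
    res n (i + 1) (ext1 n i b) = 0 := by
  funext s
  rw [res_apply, ext1_apply_of_not_mem _ _ (last_not_mem_map s.val)]
  rfl

lemma top_ext1 {n i : ℕ} (b : KoszulTerm R M n i) : top n i (ext1 n i b) = b := by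
  funext s
  rw [top_apply, ext1_apply_of_mem _ _ (Finset.mem_insert_self _ _)]
  refine kapp b _ s.property ?_
  rw [erase_insert_last', pull_map]

/-- degree 0: the kernel of the 0-th differential vanishes if `x 0` is regular. -/
lemma ker_d0 {n : ℕ} (x : Fin (n + 1) → R) (hx : IsSMulRegular M (x 0)) :
    LinearMap.ker (koszulD R M x 0) ≤ ⊥ := by
  intro f hf
  have hdf : koszulD R M x 0 f = 0 := LinearMap.mem_ker.mp hf
  have h1 : koszulD R M x 0 f ⟨{0}, Finset.card_singleton _⟩ = 0 := by rw [hdf]; rfl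
  rw [koszulD_apply] at h1
  rw [Finset.sum_eq_single_of_mem (0 : Fin (n + 1)) (Finset.mem_univ _)
    (fun j _ hj => if_neg (fun hm => hj (Finset.mem_singleton.mp hm)))] at h1
  rw [if_pos (Finset.mem_singleton_self _)] at h1
  have hfil : ({(0 : Fin (n + 1))} : Finset (Fin (n+1))).filter
      (fun a => a < (0 : Fin (n + 1))) = ∅ := by
    rw [Finset.filter_singleton, if_neg (lt_irrefl _)]
  rw [hfil, Finset.card_empty, pow_zero, one_mul, Finset.erase_singleton] at h1
  have hz : uf f (∅ : Finset (Fin (n + 1))) = 0 := by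
    apply hx
    show x 0 • uf f ∅ = x 0 • 0
    rw [smul_zero]
    exact h1
  simp only [Submodule.mem_bot]
  funext t
  have ht : t.val = ∅ := Finset.card_eq_zero.mp t.property
  show f t = 0
  calc f t = uf f t.val := uf_eq f t.val t.property
    _ = uf f ∅ := by rw [ht]
    _ = 0 := hz

/-- top degree: the image of the top differential is `(x₀,…,xₖ)M`. -/
lemma mem_range_top {k : ℕ} (y : Fin (k + 1) → R)
    (f : KoszulTerm R M (k + 1) (k + 1)) :
    f ∈ LinearMap.range (koszulD R M y k) ↔
      f ⟨Finset.univ, by simp⟩ ∈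
        (Ideal.span (Set.range y) • ⊤ : Submodule R M) := by
  constructor
  · rintro ⟨g, rfl⟩
    rw [koszulD_apply]
    apply Submodule.sum_mem
    intro j _
    rw [if_pos (Finset.mem_univ j)]
    exact Submodule.smul_mem_smul
      (Ideal.mul_mem_left _ _ (Ideal.subset_span ⟨j, rfl⟩)) Submodule.mem_top
  · intro h
    have hconst : ∀ t, f t = f ⟨Finset.univ, by simp⟩ := by
      intro t
      exact kapp f t.property (by simp)
        (Finset.eq_univ_of_card _ (by rw [t.property]; simp))
    set Φ : M →ₗ[R] KoszulTerm R M (k + 1) (k + 1) :=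
      LinearMap.pi (fun t => LinearMap.id) with hΦ
    have key : (Ideal.span (Set.range y) • ⊤ : Submodule R M) ≤
        Submodule.comap Φ (LinearMap.range (koszulD R M y k)) := by
      rw [Submodule.smul_le]
      intro r hr m _
      show r • m ∈ Submodule.comap Φ (LinearMap.range (koszulD R M y k))
      induction hr using Submodule.span_induction with
      | mem c hc =>
        obtain ⟨j, rfl⟩ := hc
        rw [Submodule.mem_comap]
        refine ⟨(fun t => if t.val = Finset.univ.erase j then
          ((-1 : R) ^ ((Finset.univ.filter (fun a => a < j)).card)) • m
          else 0), ?_⟩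
        set e := ((Finset.univ.filter (fun a => a < j)).card) with he
        set g : KoszulTerm R M (k + 1) k := (fun t => if t.val = Finset.univ.erase j then
          ((-1 : R) ^ e) • m else 0) with hgdef
        have huf : ∀ j' : Fin (k + 1),
            uf g (Finset.univ.erase j') =
              if Finset.univ.erase j' = Finset.univ.erase j then
                ((-1 : R) ^ e) • m else 0 := by
          intro j'
          rw [uf, dif_pos (by
            rw [Finset.card_erase_of_mem (Finset.mem_univ j'), Finset.card_univ,
              Fintype.card_fin, Nat.add_sub_cancel])]
        have hein : ∀ j' : Fin (k + 1),
            Finset.univ.erase j' = Finset.univ.erase j → j' = j := by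
          intro j' hjj
          by_contra hne
          have : j' ∈ Finset.univ.erase j :=
            Finset.mem_erase.mpr ⟨hne, Finset.mem_univ _⟩
          rw [← hjj] at this
          exact Finset.notMem_erase j' _ this
        funext t
        have htu : t.val = Finset.univ :=
          Finset.eq_univ_of_card _ (by rw [t.property]; simp)
        show koszulD R M y k g t = y j • m
        rw [koszulD_apply, htu]
        rw [Finset.sum_eq_single_of_mem j (Finset.mem_univ _)
          (fun j' _ hj' => by
            rw [if_pos (Finset.mem_univ j'), huf j',
              if_neg (fun hc => hj' (hein j' hc)), smul_zero])]
        rw [if_pos (Finset.mem_univ j), huf j, if_pos rfl, smul_smul, ← he]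
        have h2 : ((-1 : R) ^ e * y j) * ((-1 : R) ^ e) = y j := by
          rw [mul_comm, ← mul_assoc, ← pow_add]
          rw [Even.neg_one_pow ⟨e, rfl⟩, one_mul]
        rw [h2]
      | zero =>
        rw [zero_smul]
        exact Submodule.zero_mem _
      | add r₁ r₂ _ _ ih₁ ih₂ =>
        rw [add_smul]
        exact Submodule.add_mem _ ih₁ ih₂
      | smul a r' _ ih =>
        rw [smul_assoc]
        exact Submodule.smul_mem _ a ih
    have := key h
    rw [Submodule.mem_comap] at this
    obtain ⟨g, hg⟩ := this
    exact ⟨g, hg.trans (funext fun t => (hconst t).symm)⟩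

end KAux

namespace KAux

open RingTheory.Sequence

variable {R M : Type*} [CommRing R] [AddCommGroup M] [Module R M]

lemma take_isWeaklyRegular {rs : List R} (h : IsWeaklyRegular M rs) (k : ℕ) :
    IsWeaklyRegular M (rs.take k) := by
  constructor
  intro i hi
  have h2 : i < k ∧ i < rs.length := by
    simpa [List.length_take, lt_min_iff] using hi
  have hreg := h.regular_mod_prev i h2.2
  rw [List.getElem_take, List.take_take, min_eq_left h2.1.le]
  exact hreg

lemma ofFn_comp_castSucc {α : Type*} {n : ℕ} (x : Fin (n + 1) → α) :
    List.ofFn (x ∘ Fin.castSucc) = (List.ofFn x).take n := by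
  have hlen : (List.ofFn fun i : Fin n => x i.castSucc).length = n := by simp
  show List.ofFn (fun i : Fin n => x i.castSucc) = _
  rw [List.ofFn_succ' x, List.concat_eq_append]
  conv_lhs => rw [← List.take_left (l₁ := List.ofFn fun i : Fin n => x i.castSucc)
    (l₂ := [x (Fin.last n)])]
  rw [hlen]

lemma ofList_ofFn {m : ℕ} (y : Fin m → R) :
    Ideal.ofList (List.ofFn y) = Ideal.span (Set.range y) :=
  congrArg Ideal.span (by ext a; simp [List.mem_ofFn])

lemma head_smul_regular {n r : ℕ} (x : Fin (n + 1) → R) (hr1 : 1 ≤ r)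
    (h : IsWeaklyRegular M ((List.ofFn x).take r)) : IsSMulRegular M (x 0) := by
  obtain ⟨r', rfl⟩ : ∃ r', r = r' + 1 := ⟨r - 1, by omega⟩
  rw [List.ofFn_succ, List.take_succ_cons] at h
  exact ((isWeaklyRegular_cons_iff M _ _).mp h).1

lemma last_regular {n : ℕ} (x : Fin (n + 1) → R)
    (h : IsWeaklyRegular M (List.ofFn x)) :
    IsSMulRegular
      (M ⧸ (Ideal.span (Set.range (x ∘ Fin.castSucc)) • ⊤ : Submodule R M))
      (x (Fin.last n)) := by
  have hreg := h.regular_mod_prev n (by simp)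
  rw [List.getElem_ofFn, ← ofFn_comp_castSucc, ofList_ofFn] at hreg
  exact hreg

lemma main_aux (R M : Type*) [CommRing R] [AddCommGroup M] [Module R M] :
    ∀ (n : ℕ) (x : Fin n → R) (r : ℕ), r ≤ n →
      IsWeaklyRegular M ((List.ofFn x).take r) → ∀ j, j < r →
        LinearMap.ker (koszulD R M x j) ≤ koszulBoundary R M x j := by
  intro n
  induction n with
  | zero =>
    intro x r hr hreg j hj
    exact absurd (hj.trans_le hr) (Nat.not_lt_zero j)
  | succ n IH =>
    intro x r hr hreg j hj
    cases j with
    | zero =>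
      intro f hf
      show f ∈ (⊥ : Submodule R (KoszulTerm R M (n + 1) 0))
      exact ker_d0 x (head_smul_regular x hj hreg) hf
    | succ k =>
      set y : Fin n → R := x ∘ Fin.castSucc with hy
      intro f hf
      have hdf : koszulD R M x (k + 1) f = 0 := LinearMap.mem_ker.mp hf
      set f₀ := res n (k + 1) f with hf₀def
      set f₁ := top n k f with hf₁def
      have e0 : koszulD R M y (k + 1) f₀ = 0 := by
        rw [hf₀def, ← res_koszulD x f, hdf]
        exact map_zero _
      have e1 : koszulD R M y k f₁ +
          ((-1 : R) ^ (k + 1) * x (Fin.last n)) • f₀ = 0 := by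
        rw [hf₀def, hf₁def, ← top_koszulD x f, hdf]
        exact map_zero _
      set r' := min r n with hr'def
      have hyreg : IsWeaklyRegular M ((List.ofFn y).take r') := by
        have h1 : (List.ofFn y).take r' = ((List.ofFn x).take r).take r' := by
          rw [hy, ofFn_comp_castSucc, List.take_take, List.take_take]
          congr 1
          omega
        rw [h1]
        exact take_isWeaklyRegular hreg r'
      have hf₀ : f₀ ∈ LinearMap.range (koszulD R M y k) := by
        by_cases hcase : k + 1 < n
        · exact IH y r' (min_le_right r n) hyreg (k + 1) (by omega)
            (LinearMap.mem_ker.mpr e0)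
        · have hkn : k + 1 = n := by omega
          have hrn : r = n + 1 := by omega
          subst hkn
          have hfull : IsWeaklyRegular M (List.ofFn x) := by
            rw [List.take_of_length_le (by simp [hrn])] at hreg
            exact hreg
          have hlast := last_regular x hfull
          rw [mem_range_top]
          have hsm : ((-1 : R) ^ (k + 1) * x (Fin.last (k + 1))) • f₀ ∈
              LinearMap.range (koszulD R M y k) := by
            refine ⟨-f₁, ?_⟩
            rw [map_neg, eq_neg_of_add_eq_zero_left e1, neg_neg]
          have hval := (mem_range_top y _).mp hsm
          rw [Pi.smul_apply] at hval
          have hv2 : x (Fin.last (k + 1)) • f₀ ⟨Finset.univ, by simp⟩ ∈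
              (Ideal.span (Set.range y) • ⊤ : Submodule R M) := by
            have h3 := Submodule.smul_mem _ ((-1 : R) ^ (k + 1)) hval
            rw [smul_smul, ← mul_assoc, ← pow_add,
              Even.neg_one_pow ⟨k + 1, rfl⟩, one_mul] at h3
            exact h3
          have hq : Submodule.Quotient.mk (f₀ ⟨Finset.univ, by simp⟩) =
              (0 : M ⧸ (Ideal.span (Set.range y) • ⊤ : Submodule R M)) := by
            apply hlast
            show x (Fin.last (k + 1)) •
                Submodule.Quotient.mk (f₀ ⟨Finset.univ, by simp⟩) =
              x (Fin.last (k + 1)) • (0 : M ⧸ _)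
            rw [smul_zero, ← Submodule.Quotient.mk_smul]
            exact (Submodule.Quotient.mk_eq_zero _).mpr hv2
          exact (Submodule.Quotient.mk_eq_zero _).mp hq
      obtain ⟨g₀, hg₀⟩ := hf₀
      set f₁' := f₁ - ((-1 : R) ^ k * x (Fin.last n)) • g₀ with hf₁'
      have e2 : koszulD R M y k f₁' = 0 := by
        rw [hf₁', map_sub, map_smul, hg₀]
        have hd1 : koszulD R M y k f₁ =
            ((-1 : R) ^ k * x (Fin.last n)) • f₀ := by
          rw [eq_neg_of_add_eq_zero_left e1, ← neg_smul]
          congr 1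
          rw [pow_succ]
          ring
        rw [hd1, sub_self]
      cases k with
      | zero =>
        have h0 : f₁' = 0 := by
          have hmem := IH y r' (min_le_right r n) hyreg 0 (by omega)
            (LinearMap.mem_ker.mpr e2)
          simpa [koszulBoundary] using hmem
        have hf1eq : f₁ = x (Fin.last n) • g₀ := by
          have := eq_of_sub_eq_zero h0
          rwa [pow_zero, one_mul] at this
        show f ∈ LinearMap.range (koszulD R M x 0)
        refine ⟨ext0 n 0 g₀, ?_⟩
        have hres : res n 1 (koszulD R M x 0 (ext0 n 0 g₀)) = f₀ := by
          rw [res_koszulD, res_ext0, hg₀]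
        have htop : top n 0 (koszulD R M x 0 (ext0 n 0 g₀)) = f₁ := by
          rw [top_koszulD_zero, res_ext0, hf1eq]
        calc koszulD R M x 0 (ext0 n 0 g₀)
            = ext0 n 1 (res n 1 (koszulD R M x 0 (ext0 n 0 g₀))) +
              ext1 n 0 (top n 0 (koszulD R M x 0 (ext0 n 0 g₀))) := decompose _
          _ = ext0 n 1 f₀ + ext1 n 0 f₁ := by rw [hres, htop]
          _ = f := (decompose f).symm
      | succ k' =>
        have hmem := IH y r' (min_le_right r n) hyreg (k' + 1) (by omega)
          (LinearMap.mem_ker.mpr e2)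
        have hmem' : f₁' ∈ LinearMap.range (koszulD R M y k') := hmem
        obtain ⟨g₁, hg₁⟩ := hmem'
        show f ∈ LinearMap.range (koszulD R M x (k' + 1))
        refine ⟨ext0 n (k' + 1) g₀ + ext1 n k' g₁, ?_⟩
        have hres : res n (k' + 2)
            (koszulD R M x (k' + 1) (ext0 n (k' + 1) g₀ + ext1 n k' g₁)) = f₀ := by
          rw [res_koszulD, map_add, res_ext0, res_ext1, add_zero, hg₀]
        have htop : top n (k' + 1)
            (koszulD R M x (k' + 1) (ext0 n (k' + 1) g₀ + ext1 n k' g₁)) = f₁ := by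
          rw [top_koszulD, map_add, top_ext0, top_ext1, zero_add, map_add,
            res_ext0, res_ext1, add_zero, hg₁, hf₁']
          abel
        calc koszulD R M x (k' + 1) (ext0 n (k' + 1) g₀ + ext1 n k' g₁)
            = ext0 n (k' + 2) (res n (k' + 2) _) + ext1 n (k' + 1) (top n (k' + 1) _) :=
              decompose _
          _ = ext0 n (k' + 2) f₀ + ext1 n (k' + 1) f₁ := by rw [hres, htop]
          _ = f := (decompose f).symm

end KAux


open RingTheory.Sequence in
/-- If `x 0, …, x (r-1)` is an `M`-regular sequence (`r ≤ n`), then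
`H^j(M ⊗ K(x 0, …, x (n-1))) = 0` for all `j < r`, i.e. the kernel of the `j`-th
Koszul differential is contained in the `j`-th boundary submodule. -/
theorem koszul_cohomology_vanishing_of_regular_sequence
    (R : Type*) [CommRing R] [IsNoetherianRing R]
    (M : Type*) [AddCommGroup M] [Module R M]
    (n r : ℕ) (hr : r ≤ n) (x : Fin n → R)
    (hreg : IsWeaklyRegular M ((List.ofFn x).take r)) :
    ∀ j < r, LinearMap.ker (koszulD R M x j) ≤ koszulBoundary R M x j :=
  fun j hj => KAux.main_aux R M n x r hr hreg j hj
end
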